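/- arXiv:1512.08220 — 10 statements merged into one kernel-verified Lean document; each statement's English description precedes it below -/
import Mathlib

section
/- Let C be a binary code of length n with minimum Hamming distance at least d and size M ≥ 2. For each coordinate i, let f_i be the proportion of codewords of C having a 1 in position i. Then M ≤ (d/2) / (d/2 - Σ_{i=1}^n f_i(1-f_i)), provided the denominator d/2 - Σ_{i=1}^n f_i(1-f_i) is positive. -/
open Finset

/-- Plotkin-type bound: for a binary code `C` of length `n` with minimum Hamming
distance at least `d` and size `M ≥ 2`, with `f i` the proportion of codewords
having a `1` in position `i`, if `d/2 - ∑ f i (1 - f i) > 0` then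
`M ≤ (d/2) / (d/2 - ∑ f i (1 - f i))`. -/
theorem plotkin_type_bound (n d : ℕ) (C : Finset (Fin n → Bool))
    (hdist : ∀ u ∈ C, ∀ v ∈ C, u ≠ v → d ≤ hammingDist u v)
    (hM : 2 ≤ C.card)
    (f : Fin n → ℝ)
    (hf : ∀ i, f i = ((C.filter (fun c => c i = true)).card : ℝ) / (C.card : ℝ))
    (hden : 0 < (d : ℝ) / 2 - ∑ i, f i * (1 - f i)) :
    (C.card : ℝ) ≤ ((d : ℝ) / 2) / ((d : ℝ) / 2 - ∑ i, f i * (1 - f i)) := by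
  have hMpos : (0:ℝ) < C.card := by
    have : 0 < C.card := lt_of_lt_of_le (by norm_num) hM
    exact_mod_cast this
  set M : ℝ := (C.card : ℝ) with hMdef
  set A : Fin n → Finset (Fin n → Bool) := fun i => C.filter (fun c => c i = true) with hA
  set B : Fin n → Finset (Fin n → Bool) := fun i => C.filter (fun c => ¬ c i = true) with hB
  have hAB : ∀ i, ((A i).card : ℝ) + ((B i).card : ℝ) = M := by
    intro i
    have h := Finset.card_filter_add_card_filter_not (s := C)
      (p := fun c => c i = true)
    have h2 : (A i).card + (B i).card = C.card := h
    rw [hMdef, ← h2]; push_cast; ring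
  -- per-coordinate double count
  have key : ∀ i : Fin n, ∑ u ∈ C, ∑ v ∈ C, (if u i ≠ v i then (1:ℝ) else 0)
      = 2 * (A i).card * (B i).card := by
    intro i
    have inner : ∀ u ∈ C, ∑ v ∈ C, (if u i ≠ v i then (1:ℝ) else 0)
        = if u i = true then ((B i).card : ℝ) else ((A i).card : ℝ) := by
      intro u hu
      rw [Finset.sum_boole]
      by_cases h : u i = true
      · simp only [h, if_true]
        congr 2
        apply Finset.filter_congr
        intro v hv
        simp [h]
      · simp only [h, if_false]
        congr 2
        apply Finset.filter_congr
        intro v hv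
        have hu' : u i = false := by cases hub : u i <;> simp_all
        simp [hu']
    rw [Finset.sum_congr rfl inner]
    rw [← Finset.sum_filter_add_sum_filter_not C (fun u => u i = true)]
    rw [Finset.sum_congr rfl (fun u hu => if_pos (Finset.mem_filter.mp hu).2),
        Finset.sum_congr rfl (fun u hu => if_neg (Finset.mem_filter.mp hu).2)]
    simp only [Finset.sum_const, nsmul_eq_mul, ← hA, ← hB]
    ring
  -- total distance sum
  have hdist_eq : ∀ u v : Fin n → Bool, (hammingDist u v : ℝ)
      = ∑ i, (if u i ≠ v i then (1:ℝ) else 0) := by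
    intro u v
    rw [Finset.sum_boole, hammingDist]
  have total : ∑ u ∈ C, ∑ v ∈ C, (hammingDist u v : ℝ)
      = ∑ i, 2 * ((A i).card : ℝ) * ((B i).card : ℝ) := by
    simp_rw [hdist_eq]
    have step : ∑ u ∈ C, ∑ v ∈ C, ∑ i, (if u i ≠ v i then (1:ℝ) else 0)
        = ∑ i, ∑ u ∈ C, ∑ v ∈ C, (if u i ≠ v i then (1:ℝ) else 0) := by
      trans ∑ u ∈ C, ∑ i, ∑ v ∈ C, (if u i ≠ v i then (1:ℝ) else 0)
      · exact Finset.sum_congr rfl fun u _ => Finset.sum_comm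
      · exact Finset.sum_comm
    rw [step]
    exact Finset.sum_congr rfl (fun i _ => by rw [key i])
  -- lower bound on total distance
  have lower : (d:ℝ) * M * (M - 1) ≤ ∑ u ∈ C, ∑ v ∈ C, (hammingDist u v : ℝ) := by
    have hrow : ∀ u ∈ C, (d:ℝ) * (M - 1) ≤ ∑ v ∈ C, (hammingDist u v : ℝ) := by
      intro u hu
      have hsplit : ∑ v ∈ C, (hammingDist u v : ℝ)
          = ∑ v ∈ C.erase u, (hammingDist u v : ℝ) := by
        rw [← Finset.add_sum_erase C _ hu]
        simp [hammingDist_self]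
      rw [hsplit]
      have hcard : ((C.erase u).card : ℝ) = M - 1 := by
        rw [Finset.card_erase_of_mem hu]
        have h1 : 1 ≤ C.card := le_trans (by norm_num) hM
        rw [hMdef]
        push_cast [Nat.cast_sub h1]
        ring
      calc (d:ℝ) * (M - 1) = ∑ _v ∈ C.erase u, (d:ℝ) := by
            rw [Finset.sum_const, nsmul_eq_mul, hcard]; ring
        _ ≤ _ := Finset.sum_le_sum (fun v hv => by
            have hvC := Finset.mem_of_mem_erase hv
            have hne : u ≠ v := (Finset.ne_of_mem_erase hv).symm
            exact_mod_cast hdist u hu v hvC hne)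
    calc (d:ℝ) * M * (M - 1) = ∑ _u ∈ C, (d:ℝ) * (M - 1) := by
          rw [Finset.sum_const, nsmul_eq_mul, ← hMdef]; ring
      _ ≤ _ := Finset.sum_le_sum hrow
  -- relate to f
  have hfi : ∀ i, f i * (1 - f i) = ((A i).card : ℝ) * ((B i).card : ℝ) / M ^ 2 := by
    intro i
    have h1 : (1:ℝ) - f i = ((B i).card : ℝ) / M := by
      rw [hf i]
      field_simp
      linarith [hAB i]
    rw [h1, hf i, div_mul_div_comm, sq]
  have hsum : ∑ i, 2 * ((A i).card : ℝ) * ((B i).card : ℝ)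
      = 2 * M ^ 2 * ∑ i, f i * (1 - f i) := by
    rw [Finset.mul_sum]
    refine Finset.sum_congr rfl (fun i _ => ?_)
    rw [hfi i]
    field_simp
  have main : (d:ℝ) * M * (M - 1) ≤ 2 * M ^ 2 * ∑ i, f i * (1 - f i) := by
    calc (d:ℝ) * M * (M - 1) ≤ _ := lower
      _ = _ := total
      _ = _ := hsum
  have main2 : (d:ℝ) * (M - 1) ≤ 2 * M * ∑ i, f i * (1 - f i) := by
    have h := main
    have : ((d:ℝ) * (M - 1)) * M ≤ (2 * M * ∑ i, f i * (1 - f i)) * M := by nlinarith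
    exact le_of_mul_le_mul_right this hMpos
  rw [le_div_iff₀ hden]
  nlinarith [main2]
end

section
/- Let m, n, d, w be positive integers with w ≤ n, and set b = d - m·w·(n-w)/n. If b > 0, then every multiply constant-weight code MCWC(m,n,2d,w) has size at most d/b, i.e., M(m,n,2d,w) ≤ ⌊d/b⌋. -/
/-!
Plotkin's double counting. Let `M = #C` and sum the distance `d(u, v)` over ordered pairs of
codewords. The minimum distance gives at least `2d · M (M - 1)`. Counted coordinatewise, a
coordinate in which `f` codewords have a `1` contributes `2 f (M - f)`. In each block the column
counts add up to `M w`, so by Cauchy–Schwarz their squares add up to at least `(M w)² / n`, and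
the total is at most `2 M² · m w (n - w) / n = 2 M² (d - b)`. Comparing the two bounds gives
`b M ≤ d`.
-/

open Finset

lemma sum_mul_sub_le {ι K : Type*} [Field K] [LinearOrder K] [IsStrictOrderedRing K]
    {s : Finset ι} {f : ι → K} (hf : ∀ i ∈ s, 0 ≤ f i) (M : K) :
    ∑ i ∈ s, f i * (M - f i) ≤ M * ∑ i ∈ s, f i - (∑ i ∈ s, f i) ^ 2 / #s := by
  have hsq : (∑ i ∈ s, f i) ^ 2 / #s ≤ ∑ i ∈ s, f i ^ 2 := by
    simpa using pow_sum_div_card_le_sum_pow hf 1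
  have hexpand : ∑ i ∈ s, f i * (M - f i) = M * ∑ i ∈ s, f i - ∑ i ∈ s, f i ^ 2 := by
    rw [mul_sum, ← sum_sub_distrib]
    exact sum_congr rfl fun i _ => by ring
  linarith

section HammingCode

variable {α : Type*}

def columnWeight (C : Finset (α → Bool)) (x : α) : ℕ := #{c ∈ C | c x = true}

lemma card_mul_pred_mul_le_sum_sum_hammingDist [Fintype α] {β : Type*} [DecidableEq β]
    {C : Finset (α → β)} {D : ℕ} (hC : ∀ u ∈ C, ∀ v ∈ C, u ≠ v → D ≤ hammingDist u v) :
    #C * (#C - 1) * D ≤ ∑ u ∈ C, ∑ v ∈ C, hammingDist u v := by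
  classical
  rw [mul_assoc, ← smul_eq_mul, ← sum_const]
  refine sum_le_sum fun u hu => ?_
  rw [← sum_erase_add C _ hu, hammingDist_self, add_zero, ← card_erase_of_mem hu]
  exact card_nsmul_le_sum _ _ _ fun v hv =>
    hC u hu v (mem_of_mem_erase hv) (ne_of_mem_erase hv).symm

lemma sum_sum_ite_ne_eq (C : Finset (α → Bool)) (x : α) :
    ∑ u ∈ C, ∑ v ∈ C, (if u x ≠ v x then (1 : ℝ) else 0) =
      2 * columnWeight C x * (#C - columnWeight C x) := by
  set g : (α → Bool) → ℝ := fun c => if c x then 1 else 0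
  have hne : ∀ u v : α → Bool,
      (if u x ≠ v x then (1 : ℝ) else 0) = g u + g v - 2 * g u * g v := by
    intro u v
    cases hu : u x <;> cases hv : v x <;> norm_num [g, hu, hv]
  have hg : ∑ c ∈ C, g c = columnWeight C x := by simp [g, columnWeight]
  simp only [hne, sum_sub_distrib, sum_add_distrib, sum_const, ← mul_sum, ← sum_mul, hg,
    nsmul_eq_mul]
  ring

lemma sum_sum_hammingDist_eq [Fintype α] (C : Finset (α → Bool)) :
    ∑ u ∈ C, ∑ v ∈ C, (hammingDist u v : ℝ) =
      2 * ∑ x, (columnWeight C x : ℝ) * (#C - columnWeight C x) := by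
  have hdist : ∀ u v : α → Bool,
      (hammingDist u v : ℝ) = ∑ x, if u x ≠ v x then (1 : ℝ) else 0 := by
    intro u v
    rw [hammingDist, natCast_card_filter]
  simp_rw [hdist]
  rw [sum_congr rfl fun u _ => sum_comm, sum_comm, mul_sum]
  simp only [sum_sum_ite_ne_eq, mul_assoc]

end HammingCode

section BlockCode

variable {κ ι : Type*} [Fintype ι]

lemma sum_columnWeight_eq_card_mul {C : Finset (κ × ι → Bool)} {w : ℕ}
    (hC : ∀ c ∈ C, ∀ j, #{i | c (j, i) = true} = w) (j : κ) :
    ∑ i, columnWeight C (j, i) = #C * w := by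
  simp only [columnWeight, card_filter]
  rw [sum_comm, sum_congr rfl fun c hc => ?_, sum_const, smul_eq_mul]
  rw [← card_filter]
  exact hC c hc j

lemma sum_sum_hammingDist_le_of_blockWeight [Fintype κ] [Nonempty ι]
    {C : Finset (κ × ι → Bool)} {w : ℕ} (hC : ∀ c ∈ C, ∀ j, #{i | c (j, i) = true} = w) :
    ∑ u ∈ C, ∑ v ∈ C, (hammingDist u v : ℝ) ≤
      2 * #C ^ 2 * (Fintype.card κ * w * (Fintype.card ι - w) / Fintype.card ι) := by
  have hn : (Fintype.card ι : ℝ) ≠ 0 := by positivity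
  have hblock : ∀ j, ∑ i, (columnWeight C (j, i) : ℝ) * (#C - columnWeight C (j, i)) ≤
      #C ^ 2 * w * (Fintype.card ι - w) / Fintype.card ι := by
    intro j
    have hsum : ∑ i, (columnWeight C (j, i) : ℝ) = #C * w := by
      rw [← Nat.cast_sum, sum_columnWeight_eq_card_mul hC j, Nat.cast_mul]
    calc _ ≤ #C * (#C * w) - (#C * w : ℝ) ^ 2 / Fintype.card ι := by
          simpa only [hsum, card_univ] using
            sum_mul_sub_le (s := univ) (fun i _ => Nat.cast_nonneg (columnWeight C (j, i)))
              (#C : ℝ)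
      _ = _ := by field_simp
  rw [sum_sum_hammingDist_eq, Fintype.sum_prod_type]
  grw [sum_le_sum fun j _ => hblock j]
  rw [sum_const, card_univ, nsmul_eq_mul]
  exact le_of_eq (by ring)

end BlockCode

theorem mcwc_plotkin_bound_general (m n d w : ℕ) (hn : 0 < n)
    (b : ℝ) (hb : b = (d : ℝ) - (m : ℝ) * w * ((n : ℝ) - w) / n) (hbpos : 0 < b)
    (C : Finset (Fin m × Fin n → Bool))
    (hweight : ∀ c ∈ C, ∀ j : Fin m,
      (univ.filter (fun i : Fin n => c (j, i) = true)).card = w)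
    (hdist : ∀ u ∈ C, ∀ v ∈ C, u ≠ v → 2 * d ≤ hammingDist u v) :
    (C.card : ℝ) ≤ (d : ℝ) / b := by
  obtain hC | hC := C.eq_empty_or_nonempty
  · simpa [hC] using div_nonneg (Nat.cast_nonneg d) hbpos.le
  have : Nonempty (Fin n) := ⟨⟨0, hn⟩⟩
  have hM : (1 : ℝ) ≤ #C := by exact_mod_cast hC.card_pos
  have hlower : (#C : ℝ) * (#C - 1) * (2 * d) ≤ ∑ u ∈ C, ∑ v ∈ C, (hammingDist u v : ℝ) := by
    simpa [Nat.cast_sub hC.card_pos] using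
      (Nat.cast_le (α := ℝ)).mpr (card_mul_pred_mul_le_sum_sum_hammingDist hdist)
  have hupper := sum_sum_hammingDist_le_of_blockWeight hweight
  have hmw : (m : ℝ) * w * (n - w) / n = d - b := by rw [hb]; ring
  rw [Fintype.card_fin, Fintype.card_fin, hmw] at hupper
  rw [le_div_iff₀ hbpos]
  nlinarith

/-- Plotkin/Johnson-type bound for multiply constant-weight codes: with
`b = d - m·w·(n-w)/n > 0`, every `MCWC(m,n,2d,w)` has size at most `d/b`. -/
theorem mcwc_plotkin_bound (m n d w : ℕ) (hm : 0 < m) (hn : 0 < n) (hd : 0 < d)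
    (hw : 0 < w) (hwn : w ≤ n)
    (b : ℝ) (hb : b = (d : ℝ) - (m : ℝ) * w * ((n : ℝ) - w) / n) (hbpos : 0 < b)
    (C : Finset (Fin m × Fin n → Bool))
    (hweight : ∀ c ∈ C, ∀ j : Fin m,
      (univ.filter (fun i : Fin n => c (j, i) = true)).card = w)
    (hdist : ∀ u ∈ C, ∀ v ∈ C, u ≠ v → 2 * d ≤ hammingDist u v) :
    (C.card : ℝ) ≤ (d : ℝ) / b :=
  mcwc_plotkin_bound_general m n d w hn b hb hbpos C hweight hdist
end

section
/- Let q, m, n, w, d₁, d₂ be positive integers with q ≤ A(n,d₁,w), where A(n,d₁,w) is the maximum size of a binary constant-weight code of length n, weight w and distance d₁. Then M(m, n, d₁·d₂, w) ≥ A_q(m, d₂), where A_q(m,d₂) is the maximum size of a q-ary code of length m with minimum distance d₂. -/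
/-!
Fix an injective map `φ` from the `q` symbols into a constant-weight code `D` of length `n`,
weight `w` and distance `d₁` with `|D| = A(n,d₁,w) ≥ q`, and encode a `q`-ary word of length `m`
blockwise with `φ`. Every block of the image has weight `w`; the Hamming distance of two images
is the sum of the blockwise distances, and each of the at least `d₂` blocks where the two words
differ contributes at least `d₁`. Encoding is injective, so an optimal `q`-ary code of distance
`d₂` becomes an `MCWC(m,n,d₁d₂,w)` of the same size.
-/

open Finset

/-- Maximum size of a binary constant-weight code of length `n`, minimum
distance `d` and constant weight `w`. -/
noncomputable def Acw (n d w : ℕ) : ℕ :=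
  sSup {k | ∃ C : Finset (Fin n → Bool),
    (∀ c ∈ C, (univ.filter fun i => c i = true).card = w) ∧
    (∀ u ∈ C, ∀ v ∈ C, u ≠ v → d ≤ hammingDist u v) ∧ C.card = k}

/-- Maximum size of a `q`-ary code of length `m` with minimum distance `d`. -/
noncomputable def Aq (q m d : ℕ) : ℕ :=
  sSup {k | ∃ C : Finset (Fin m → Fin q),
    (∀ u ∈ C, ∀ v ∈ C, u ≠ v → d ≤ hammingDist u v) ∧ C.card = k}

/-- Maximum size of a multiply constant-weight code `MCWC(m,n,d,w)`. -/
noncomputable def Mmcwc (m n d w : ℕ) : ℕ :=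
  sSup {k | ∃ C : Finset (Fin m × Fin n → Bool),
    (∀ c ∈ C, ∀ j : Fin m, (univ.filter fun i : Fin n => c (j, i) = true).card = w) ∧
    (∀ u ∈ C, ∀ v ∈ C, u ≠ v → d ≤ hammingDist u v) ∧ C.card = k}

section Concatenation

variable {κ ι α β : Type*}

def concatenate (φ : α → ι → β) (u : κ → α) : κ × ι → β :=
  fun x => φ (u x.1) x.2

theorem concatenate_injective {φ : α → ι → β} (hφ : Function.Injective φ) :
    Function.Injective (concatenate (κ := κ) φ) :=
  fun _ _ huv => funext fun j => hφ <| funext fun i => congrFun huv (j, i)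

variable [Fintype κ] [Fintype ι] [DecidableEq β]

theorem hammingDist_concatenate (φ : α → ι → β) (u v : κ → α) :
    hammingDist (concatenate φ u) (concatenate φ v) = ∑ j, hammingDist (φ (u j)) (φ (v j)) := by
  simp only [hammingDist, card_filter]
  exact Fintype.sum_prod_type _

theorem mul_hammingDist_le_hammingDist_concatenate [DecidableEq α] {φ : α → ι → β} {d : ℕ}
    (hφ : ∀ a b, a ≠ b → d ≤ hammingDist (φ a) (φ b)) (u v : κ → α) :
    d * hammingDist u v ≤ hammingDist (concatenate φ u) (concatenate φ v) := by
  rw [hammingDist_concatenate, hammingDist, card_filter, mul_sum]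
  refine sum_le_sum fun j _ => ?_
  split_ifs with huv
  · simpa using hφ _ _ huv
  · simp

end Concatenation

theorem bddAbove_of_forall_exists_card_eq {α : Type*} [Fintype α] {S : Set ℕ}
    (h : ∀ k ∈ S, ∃ C : Finset α, #C = k) : BddAbove S :=
  ⟨Fintype.card α, fun k hk => by
    obtain ⟨C, rfl⟩ := h k hk
    exact C.card_le_univ⟩

theorem exists_card_eq_Acw (n d w : ℕ) :
    ∃ D : Finset (Fin n → Bool), (∀ c ∈ D, #{i | c i = true} = w) ∧
      (∀ u ∈ D, ∀ v ∈ D, u ≠ v → d ≤ hammingDist u v) ∧ #D = Acw n d w :=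
  show Acw n d w ∈ _ from Nat.sSup_mem ⟨0, ∅, by simp, by simp, rfl⟩
    (bddAbove_of_forall_exists_card_eq fun _ ⟨C, _, _, hC⟩ => ⟨C, hC⟩)

theorem Aq_le_of_forall_card_le {q m d K : ℕ}
    (h : ∀ C : Finset (Fin m → Fin q),
      (∀ u ∈ C, ∀ v ∈ C, u ≠ v → d ≤ hammingDist u v) → #C ≤ K) :
    Aq q m d ≤ K :=
  csSup_le ⟨0, ∅, by simp, rfl⟩ (by rintro k ⟨C, hC, rfl⟩; exact h C hC)

theorem card_le_Mmcwc {m n d w : ℕ} {C : Finset (Fin m × Fin n → Bool)}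
    (hw : ∀ c ∈ C, ∀ j : Fin m, #{i : Fin n | c (j, i) = true} = w)
    (hd : ∀ u ∈ C, ∀ v ∈ C, u ≠ v → d ≤ hammingDist u v) :
    #C ≤ Mmcwc m n d w :=
  le_csSup (bddAbove_of_forall_exists_card_eq fun _ ⟨C, _, _, hC⟩ => ⟨C, hC⟩) ⟨C, hw, hd, rfl⟩

theorem mcwc_concatenation_bound_general (q m n w d₁ d₂ : ℕ)
    (hqA : q ≤ Acw n d₁ w) :
    Aq q m d₂ ≤ Mmcwc m n (d₁ * d₂) w := by
  obtain ⟨D, hDw, hDd, hDcard⟩ := exists_card_eq_Acw n d₁ w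
  let φ : Fin q ↪ (Fin n → Bool) :=
    (Fin.castLEEmb (hDcard ▸ hqA)).trans (D.equivFin.symm.toEmbedding.trans (.subtype _))
  have hφD (a : Fin q) : φ a ∈ D := (D.equivFin.symm _).2
  have hφd (a b : Fin q) (hab : a ≠ b) : d₁ ≤ hammingDist (φ a) (φ b) :=
    hDd _ (hφD a) _ (hφD b) (φ.injective.ne hab)
  refine Aq_le_of_forall_card_le fun C hC => ?_
  rw [← card_image_of_injective C (concatenate_injective φ.injective)]
  refine card_le_Mmcwc ?_ ?_
  · rintro _ hc j
    obtain ⟨u, -, rfl⟩ := mem_image.1 hc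
    exact hDw _ (hφD (u j))
  · rintro _ hu' _ hv' huv'
    obtain ⟨u, hu, rfl⟩ := mem_image.1 hu'
    obtain ⟨v, hv, rfl⟩ := mem_image.1 hv'
    calc d₁ * d₂ ≤ d₁ * hammingDist u v :=
          Nat.mul_le_mul_left d₁ (hC u hu v hv fun h => huv' (congrArg _ h))
      _ ≤ _ := mul_hammingDist_le_hammingDist_concatenate hφd u v

/-- Concatenation construction: if `q ≤ A(n,d₁,w)` then
`M(m,n,d₁·d₂,w) ≥ A_q(m,d₂)`. -/
theorem mcwc_concatenation_bound (q m n w d₁ d₂ : ℕ)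
    (hq : 0 < q) (hm : 0 < m) (hn : 0 < n) (hw : 0 < w) (hd₁ : 0 < d₁) (hd₂ : 0 < d₂)
    (hqA : q ≤ Acw n d₁ w) :
    Aq q m d₂ ≤ Mmcwc m n (d₁ * d₂) w :=
  mcwc_concatenation_bound_general q m n w d₁ d₂ hqA
end

section
/- Let H(x) = -x·log₂ x - (1-x)·log₂(1-x) be the binary entropy function, extended by H(0)=H(1)=0. Define f(x,ω) = -(2-2ω-x)·log₂(1-ω) + x·log₂(x/ω) + (1-ω-x)·log₂(1-ω-x). Then for 0 < ω ≤ 1/4 and 0 < x ≤ ω, one has f(x,ω) ≥ 0, with equality if and only if x = ω - ω². -/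
open Real

lemma kl_term_ge (a b : ℝ) (ha : 0 < a) (hb : 0 < b) :
    a - b ≤ a * (Real.log a - Real.log b) := by
  have h := Real.log_le_sub_one_of_pos (div_pos hb ha)
  rw [Real.log_div hb.ne' ha.ne'] at h
  have h2 := mul_le_mul_of_nonneg_left h ha.le
  have hba : a * (b / a - 1) = b - a := by field_simp
  nlinarith

lemma kl_term_gt (a b : ℝ) (ha : 0 < a) (hb : 0 < b) (hne : a ≠ b) :
    a - b < a * (Real.log a - Real.log b) := by
  have hne' : b / a ≠ 1 := by
    intro h
    exact hne ((div_eq_one_iff_eq ha.ne').mp h).symm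
  have h := Real.log_lt_sub_one_of_pos (div_pos hb ha) hne'
  rw [Real.log_div hb.ne' ha.ne'] at h
  have h2 := mul_lt_mul_of_pos_left h ha
  have hba : a * (b / a - 1) = b - a := by field_simp
  nlinarith

/-- Key analytic inequality (case (a) of the GV-vs-concatenation comparison):
for `0 < ω ≤ 1/4` and `0 < x ≤ ω`, the function
`f(x,ω) = -(2-2ω-x)·log₂(1-ω) + x·log₂(x/ω) + (1-ω-x)·log₂(1-ω-x)`
is nonnegative, with equality if and only if `x = ω - ω²`. -/
theorem gv_vs_concat_case_a (ω x : ℝ) (hω0 : 0 < ω) (hω : ω ≤ 1 / 4)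
    (hx0 : 0 < x) (hx : x ≤ ω) :
    0 ≤ -(2 - 2 * ω - x) * logb 2 (1 - ω) + x * logb 2 (x / ω)
        + (1 - ω - x) * logb 2 (1 - ω - x) ∧
    ((-(2 - 2 * ω - x) * logb 2 (1 - ω) + x * logb 2 (x / ω)
        + (1 - ω - x) * logb 2 (1 - ω - x) = 0) ↔ x = ω - ω ^ 2) := by
  have h1ω : 0 < 1 - ω := by linarith
  have hv : 0 < 1 - ω - x := by linarith
  have hu0 : 0 < ω * (1 - ω) := by positivity
  have hl2 : 0 < Real.log 2 := Real.log_pos (by norm_num)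
  -- the KL form
  set A : ℝ := x * (Real.log x - Real.log (ω * (1 - ω)))
      + (1 - ω - x) * (Real.log (1 - ω - x) - Real.log ((1 - ω) ^ 2)) with hA
  have key : -(2 - 2 * ω - x) * logb 2 (1 - ω) + x * logb 2 (x / ω)
        + (1 - ω - x) * logb 2 (1 - ω - x) = A / Real.log 2 := by
    rw [hA]
    simp only [Real.logb, Real.log_div hx0.ne' hω0.ne',
      Real.log_mul hω0.ne' h1ω.ne', Real.log_pow]
    field_simp
    ring
  have hAge : 0 ≤ A := by
    have h1 := kl_term_ge x (ω * (1 - ω)) hx0 hu0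
    have h2 := kl_term_ge (1 - ω - x) ((1 - ω) ^ 2) hv (by positivity)
    nlinarith
  have hAeq : A = 0 ↔ x = ω - ω ^ 2 := by
    constructor
    · intro h0
      by_contra hne
      have hne1 : x ≠ ω * (1 - ω) := by intro h; apply hne; rw [h]; ring
      have hne2 : (1 - ω - x) ≠ (1 - ω) ^ 2 := by
        intro h; apply hne; nlinarith
      have h1 := kl_term_gt x (ω * (1 - ω)) hx0 hu0 hne1
      have h2 := kl_term_gt (1 - ω - x) ((1 - ω) ^ 2) hv (by positivity) hne2
      nlinarith
    · intro h
      have hx1 : x = ω * (1 - ω) := by rw [h]; ring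
      have hx2 : (1 - ω - x) = (1 - ω) ^ 2 := by rw [h]; ring
      have e1 : Real.log x = Real.log (ω * (1 - ω)) := by rw [hx1]
      have e2 : Real.log (1 - ω - x) = Real.log ((1 - ω) ^ 2) := by rw [hx2]
      rw [hA, e1, e2, hx1]; ring
  refine ⟨by rw [key]; positivity, ?_⟩
  rw [key, div_eq_zero_iff]
  constructor
  · rintro (h | h)
    · exact hAeq.mp h
    · exact absurd h hl2.ne'
  · intro h; exact Or.inl (hAeq.mpr h)
end

section
/- Let g(ω) = (3ω-2)·log₂(1-ω) - (2ω-1)·log₂(1-2ω) for 0 ≤ ω < 1/2. Then g(ω) ≥ 0 for all 0 ≤ ω ≤ 1/4. -/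
/-!
Expanding `-log (1 - x) = ∑ xᵏ / k`, the function `g(ω) · log 2 = (2 - 3ω)(-log (1 - ω)) - (1 - 2ω)(-log (1 - 2ω))`
becomes the power series `∑_{k ≥ 2} (2ᵏ - k - 2) / (k (k - 1)) · ωᵏ`: the linear terms cancel, and every
coefficient is nonnegative because `2ᵏ ≥ k + 2`. Hence `g ≥ 0` on all of `[0, 1/2)`.
-/

open Real

lemma hasSum_pow_div_add_two_of_abs_lt_one {x : ℝ} (h : |x| < 1) :
    HasSum (fun n : ℕ => x ^ (n + 2) / (n + 2)) (-log (1 - x) - x) := by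
  have := (hasSum_nat_add_iff' 1).mpr (hasSum_pow_div_log_of_abs_lt_one h)
  convert! this using 1
  · ext n; push_cast; ring
  · simp

lemma hasSum_pow_add_two_div_add_one_of_abs_lt_one {x : ℝ} (h : |x| < 1) :
    HasSum (fun n : ℕ => x ^ (n + 2) / (n + 1)) (x * -log (1 - x)) := by
  convert! (hasSum_pow_div_log_of_abs_lt_one h).mul_left x using 1
  ext n; field_simp; ring

lemma hasSum_log_combination {ω : ℝ} (h : |ω| < 1 / 2) :
    HasSum (fun n : ℕ => (2 ^ (n + 2) - n - 4) / ((n + 1) * (n + 2)) * ω ^ (n + 2))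
      ((3 * ω - 2) * log (1 - ω) - (2 * ω - 1) * log (1 - 2 * ω)) := by
  have h1 : |ω| < 1 := by linarith
  have h2 : |2 * ω| < 1 := by rw [abs_mul, abs_two]; linarith
  have := (((hasSum_pow_div_add_two_of_abs_lt_one h1).mul_left 2).sub
    (hasSum_pow_div_add_two_of_abs_lt_one h2)).sub
    (((hasSum_pow_add_two_div_add_one_of_abs_lt_one h1).mul_left 3).sub
    (hasSum_pow_add_two_div_add_one_of_abs_lt_one h2))
  convert! this using 1
  · ext n
    field_simp
    ring
  · ring

lemma add_four_le_two_pow_add_two (n : ℕ) : (n : ℝ) + 4 ≤ 2 ^ (n + 2) := by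
  have := n.lt_two_pow_self
  exact_mod_cast (by rw [pow_add]; omega : n + 4 ≤ 2 ^ (n + 2))

lemma log_combination_nonneg {ω : ℝ} (h0 : 0 ≤ ω) (h1 : ω < 1 / 2) :
    0 ≤ (3 * ω - 2) * log (1 - ω) - (2 * ω - 1) * log (1 - 2 * ω) := by
  refine (hasSum_log_combination (by rwa [abs_of_nonneg h0])).nonneg fun n => ?_
  have := add_four_le_two_pow_add_two n
  exact mul_nonneg (div_nonneg (by linarith) (by positivity)) (by positivity)

/-- The function `g(ω) = (3ω-2)·log₂(1-ω) - (2ω-1)·log₂(1-2ω)` is nonnegative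
for `0 ≤ ω ≤ 1/4`. -/
theorem g_nonneg (ω : ℝ) (h0 : 0 ≤ ω) (h1 : ω ≤ 1 / 4) :
    0 ≤ (3 * ω - 2) * logb 2 (1 - ω) - (2 * ω - 1) * logb 2 (1 - 2 * ω) := by
  have hlog : 0 ≤ ((3 * ω - 2) * log (1 - ω) - (2 * ω - 1) * log (1 - 2 * ω)) / log 2 :=
    div_nonneg (log_combination_nonneg h0 (by linarith)) (log_nonneg one_le_two)
  simpa only [logb, mul_div_assoc, sub_div] using hlog
end

section
/- Let v ≡ 1 (mod 4) and s ≡ 1 (mod 2) with v ≤ s ≤ 2v-1. Then there exists a multiply constant-weight code MCWC(2,v;2,s;6) of size s(v-1)/4 if and only if there exists a skew almost-resolvable square SAS(s,v). -/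
/-!
A codeword of weight 2 in each part is a pair `P` of points together with a pair `Q` of
indices, and two such words are at Hamming distance `8 - 2 (|P ∩ P'| + |Q ∩ Q'|)`; so distance
at least 6 means that two codewords share at most one point or index in total. Writing the
point pair of each codeword into the cell `(i, j)`, `i < j`, of its index pair `{i, j}` turns a
code into an array and back, and "no two codewords share both the point `y` and the index `k`"
becomes "`y` occurs at most once in row and column `k`".

In an SAS every row and column covers `v - 1` points, so there are `s (v - 1) / 4` filled cells.
Conversely, in the array of a code each row and column covers an even number of points, at most
`v`, hence at most `v - 1` as `v` is odd; a code of size `s (v - 1) / 4` forces equality in every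
row and column, so each misses exactly one point.
-/

open Finset

/-- A skew almost-resolvable square `SAS(s,v)`: an `s × s` array whose cells are
either empty or contain a pair of points of a `v`-set, such that (1) for
`i ≠ j` at most one of the cells `(i,j)`, `(j,i)` is filled, (2) the diagonal is
empty, (3) every filled cell contains exactly a pair, (4) no pair of points
appears in more than one cell, and (5) for each index `i` the pairs in row `i`
together with those in column `i` partition `V ∖ {x}` for some point `x`. -/
def IsSAS (s v : ℕ) (A : Fin s → Fin s → Finset (Fin v)) : Prop :=
  (∀ i j : Fin s, i ≠ j → A i j = ∅ ∨ A j i = ∅) ∧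
  (∀ i : Fin s, A i i = ∅) ∧
  (∀ i j : Fin s, A i j = ∅ ∨ (A i j).card = 2) ∧
  (∀ i j i' j' : Fin s, ∀ a b : Fin v, a ≠ b →
    a ∈ A i j → b ∈ A i j → a ∈ A i' j' → b ∈ A i' j' → i = i' ∧ j = j') ∧
  (∀ i : Fin s, ∃ x : Fin v, ∀ y : Fin v,
    (univ.filter (fun j => y ∈ A i j)).card + (univ.filter (fun j => y ∈ A j i)).card
      = if y = x then 0 else 1)

lemma hammingDist_sum_type {α β γ : Type*} [Fintype α] [Fintype β] [DecidableEq γ]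
    (u w : α ⊕ β → γ) :
    hammingDist u w = hammingDist (u ∘ Sum.inl) (w ∘ Sum.inl) +
      hammingDist (u ∘ Sum.inr) (w ∘ Sum.inr) := by
  simp only [hammingDist, card_filter, Fintype.sum_sum_type, Function.comp_apply]

lemma hammingDist_add_two_mul_card_filter_and {ι : Type*} [Fintype ι] (f g : ι → Bool) :
    hammingDist f g + 2 * #{i | f i ∧ g i} = #{i | f i} + #{i | g i} := by
  simp only [hammingDist, card_filter, mul_sum, ← sum_add_distrib]
  refine sum_congr rfl fun i _ => ?_
  cases f i <;> cases g i <;> rfl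

section Supports

variable {α β : Type*}

def leftSupport [Fintype α] (c : α ⊕ β → Bool) : Finset α := {a | c (.inl a)}

def rightSupport [Fintype β] (c : α ⊕ β → Bool) : Finset β := {b | c (.inr b)}

def ofSupports [DecidableEq α] [DecidableEq β] (P : Finset α) (Q : Finset β) :
    α ⊕ β → Bool :=
  Sum.elim (· ∈ P) (· ∈ Q)

@[simp] lemma leftSupport_ofSupports [Fintype α] [DecidableEq α] [DecidableEq β]
    (P : Finset α) (Q : Finset β) : leftSupport (ofSupports P Q) = P := by
  ext; simp [leftSupport, ofSupports]

@[simp] lemma rightSupport_ofSupports [Fintype β] [DecidableEq α] [DecidableEq β]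
    (P : Finset α) (Q : Finset β) : rightSupport (ofSupports P Q) = Q := by
  ext; simp [rightSupport, ofSupports]

variable [Fintype α] [Fintype β] [DecidableEq α] [DecidableEq β]

lemma hammingDist_add_two_mul_card_inter_supports (u w : α ⊕ β → Bool) :
    hammingDist u w +
        2 * (#(leftSupport u ∩ leftSupport w) + #(rightSupport u ∩ rightSupport w)) =
      #(leftSupport u) + #(leftSupport w) + #(rightSupport u) + #(rightSupport w) := by
  have hl := hammingDist_add_two_mul_card_filter_and (u ∘ Sum.inl) (w ∘ Sum.inl)
  have hr := hammingDist_add_two_mul_card_filter_and (u ∘ Sum.inr) (w ∘ Sum.inr)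
  rw [hammingDist_sum_type]
  simp only [leftSupport, rightSupport, ← filter_and, Function.comp_apply] at hl hr ⊢
  omega

lemma six_le_hammingDist_iff {u w : α ⊕ β → Bool}
    (hu : #(leftSupport u) = 2) (hu' : #(rightSupport u) = 2)
    (hw : #(leftSupport w) = 2) (hw' : #(rightSupport w) = 2) :
    6 ≤ hammingDist u w ↔
      #(leftSupport u ∩ leftSupport w) + #(rightSupport u ∩ rightSupport w) ≤ 1 := by
  have := hammingDist_add_two_mul_card_inter_supports u w
  omega

end Supports

/-- An `MCWC(2,|α|;2,|β|;6)`. -/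
structure IsMCWC {α β : Type*} [Fintype α] [Fintype β] (C : Finset (α ⊕ β → Bool)) :
    Prop where
  card_leftSupport : ∀ c ∈ C, #(leftSupport c) = 2
  card_rightSupport : ∀ c ∈ C, #(rightSupport c) = 2
  six_le_hammingDist : ∀ u ∈ C, ∀ w ∈ C, u ≠ w → 6 ≤ hammingDist u w

namespace IsMCWC

variable {α β : Type*} [Fintype α] [Fintype β] [DecidableEq α] [DecidableEq β]
  {C : Finset (α ⊕ β → Bool)}

lemma of_card_inter_add_card_inter_le_one (hP : ∀ c ∈ C, #(leftSupport c) = 2)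
    (hQ : ∀ c ∈ C, #(rightSupport c) = 2)
    (hd : ∀ u ∈ C, ∀ w ∈ C, u ≠ w →
      #(leftSupport u ∩ leftSupport w) + #(rightSupport u ∩ rightSupport w) ≤ 1) :
    IsMCWC C :=
  ⟨hP, hQ, fun u hu w hw huw =>
    (six_le_hammingDist_iff (hP u hu) (hQ u hu) (hP w hw) (hQ w hw)).mpr (hd u hu w hw huw)⟩

lemma eq_of_two_le_card_inter_add_card_inter (hC : IsMCWC C) {u w : α ⊕ β → Bool}
    (hu : u ∈ C) (hw : w ∈ C)
    (h : 2 ≤ #(leftSupport u ∩ leftSupport w) + #(rightSupport u ∩ rightSupport w)) :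
    u = w := by
  by_contra huw
  have := (six_le_hammingDist_iff (hC.card_leftSupport u hu) (hC.card_rightSupport u hu)
    (hC.card_leftSupport w hw) (hC.card_rightSupport w hw)).mp
    (hC.six_le_hammingDist u hu w hw huw)
  omega

end IsMCWC

lemma Finset.eq_of_two_le_card_inter {α : Type*} [DecidableEq α] {A B : Finset α}
    (hA : #A = 2) (hB : #B = 2) (h : 2 ≤ #(A ∩ B)) : A = B := by
  have hAB : A ∩ B = A := eq_of_subset_of_card_le inter_subset_left (by omega)
  exact eq_of_subset_of_card_le (inter_eq_left.mp hAB) (by omega)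

lemma Finset.pair_eq_pair_of_lt {α : Type*} [LinearOrder α] {a b c d : α} (hab : a < b)
    (hcd : c < d) (h : ({a, b} : Finset α) = {c, d}) : a = c ∧ b = d := by
  rw [← coe_inj, coe_pair, coe_pair, Set.pair_eq_pair_iff] at h
  rcases h with h | ⟨rfl, rfl⟩
  · exact h
  · exact absurd (hab.trans hcd) (lt_irrefl a)

lemma Finset.exists_lt_pair_eq {α : Type*} [LinearOrder α] {Q : Finset α} (hQ : #Q = 2) :
    ∃ a b, a < b ∧ Q = {a, b} := by
  obtain ⟨a, b, hab, rfl⟩ := card_eq_two.mp hQ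
  rcases hab.lt_or_gt with h | h
  · exact ⟨a, b, h, rfl⟩
  · exact ⟨b, a, h, pair_comm a b⟩

section Arrays

variable {ι α : Type*}

def rowColCount [Fintype ι] [DecidableEq α] (A : ι → ι → Finset α) (k : ι) (y : α) :
    ℕ :=
  #{j | y ∈ A k j} + #{j | y ∈ A j k}

def filledCells [Fintype ι] (A : ι → ι → Finset α) : Finset (ι × ι) :=
  {p | (A p.1 p.2).Nonempty}

variable [Fintype ι] {A : ι → ι → Finset α}

lemma sum_sum_card_eq_two_mul_card_filledCells (hcard : ∀ i j, A i j = ∅ ∨ #(A i j) = 2) :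
    ∑ i, ∑ j, #(A i j) = 2 * #(filledCells A) := by
  rw [← Fintype.sum_prod_type', filledCells, card_eq_sum_ones, mul_sum, sum_filter]
  refine sum_congr rfl fun p _ => ?_
  rcases hcard p.1 p.2 with h | h
  · simp [h]
  · simp [h, card_pos.mp (by omega : 0 < #(A p.1 p.2))]

lemma sum_card_filter_mem {β : Type*} [Fintype β] [DecidableEq β] (B : ι → Finset β) :
    ∑ y, #{j | y ∈ B j} = ∑ j, #(B j) := by
  simp only [card_filter]
  rw [sum_comm]
  simp

variable [DecidableEq α]

lemma rowColCount_eq_card_filter [DecidableEq ι] (hdiag : ∀ i, A i i = ∅) (k : ι) (y : α) :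
    rowColCount A k y = #{p : ι × ι | y ∈ A p.1 p.2 ∧ (p.1 = k ∨ p.2 = k)} := by
  have hrow : #{p : ι × ι | y ∈ A p.1 p.2 ∧ p.1 = k} = #{j | y ∈ A k j} :=
    card_nbij' Prod.snd (Prod.mk k) (by intro; aesop) (by intro; aesop) (by intro; aesop)
      (by intro; aesop)
  have hcol : #{p : ι × ι | y ∈ A p.1 p.2 ∧ p.2 = k} = #{j | y ∈ A j k} :=
    card_nbij' Prod.fst (Prod.mk · k) (by intro; aesop) (by intro; aesop) (by intro; aesop)
      (by intro; aesop)
  have hdisj : Disjoint (α := Finset (ι × ι)) {p | y ∈ A p.1 p.2 ∧ p.1 = k}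
      {p | y ∈ A p.1 p.2 ∧ p.2 = k} := by
    refine disjoint_filter.mpr ?_
    rintro ⟨i, j⟩ - ⟨-, hi⟩ ⟨hy, hj⟩
    simp only at hi hj hy
    simp [hi, hj, hdiag] at hy
  rw [rowColCount, ← hrow, ← hcol, ← card_union_of_disjoint hdisj, ← filter_or]
  simp only [and_or_left]

variable [Fintype α]

lemma sum_rowColCount (k : ι) : ∑ y, rowColCount A k y = ∑ j, (#(A k j) + #(A j k)) := by
  simp only [rowColCount, sum_add_distrib, sum_card_filter_mem]

lemma sum_sum_rowColCount : ∑ k, ∑ y, rowColCount A k y = 2 * ∑ i, ∑ j, #(A i j) := by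
  simp only [sum_rowColCount, sum_add_distrib]
  rw [sum_comm (f := fun k j => #(A j k))]
  ring

end Arrays

lemma sum_ite_eq_zero_one {α : Type*} [Fintype α] [DecidableEq α] (x : α) :
    ∑ y, (if y = x then 0 else 1) = Fintype.card α - 1 := by
  simp [sum_ite, filter_ne', card_univ]

lemma exists_eq_ite_of_sum_eq {α : Type*} [Fintype α] [DecidableEq α] {t : α → ℕ}
    (ht : ∀ y, t y ≤ 1) (hα : 0 < Fintype.card α) (hsum : ∑ y, t y = Fintype.card α - 1) :
    ∃ x, ∀ y, t y = if y = x then 0 else 1 := by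
  have hsum' : ∑ y, t y = #{y | ¬t y = 0} := by
    rw [card_filter]
    refine sum_congr rfl fun y _ => ?_
    have := ht y
    split_ifs <;> omega
  have hzero : #{y | t y = 0} = 1 := by
    have := card_filter_add_card_filter_not (s := univ) (fun y => t y = 0)
    rw [card_univ] at this
    omega
  obtain ⟨x, hx⟩ := card_eq_one.mp hzero
  refine ⟨x, fun y => ?_⟩
  have hy : t y = 0 ↔ y = x := by simpa using Finset.ext_iff.mp hx y
  split_ifs with h
  · exact hy.mpr h
  · have := ht y; have := mt hy.mp h; omega

lemma exists_rowColCount_eq_ite {ι α : Type*} [Fintype ι] [Fintype α] [DecidableEq α]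
    {A : ι → ι → Finset α} (hα : Odd (Fintype.card α))
    (hcard : ∀ i j, A i j = ∅ ∨ #(A i j) = 2) (hle : ∀ k y, rowColCount A k y ≤ 1)
    (hsum : Fintype.card ι * (Fintype.card α - 1) ≤ 2 * ∑ i, ∑ j, #(A i j)) (k : ι) :
    ∃ x, ∀ y, rowColCount A k y = if y = x then 0 else 1 := by
  have hcard_even : ∀ i j, Even #(A i j) := fun i j => by
    rcases hcard i j with h | h <;> simp [h]
  -- a row sum is even and at most `Fintype.card α`, which is odd
  have hrow_le : ∀ i, ∑ y, rowColCount A i y ≤ Fintype.card α - 1 := by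
    intro i
    have hle_card : ∑ y, rowColCount A i y ≤ Fintype.card α :=
      (sum_le_sum fun y _ => hle i y).trans_eq (by simp)
    have heven : Even (∑ y, rowColCount A i y) := by
      rw [sum_rowColCount]
      exact Finset.even_sum _ fun j _ => (hcard_even i j).add (hcard_even j i)
    obtain ⟨m, hm⟩ := hα
    obtain ⟨r, hr⟩ := heven
    omega
  have hrow_eq : ∑ y, rowColCount A k y = Fintype.card α - 1 := by
    have hle_sum := sum_le_sum fun i (_ : i ∈ univ) => hrow_le i
    have hge_sum : ∑ _i : ι, (Fintype.card α - 1) ≤ ∑ i, ∑ y, rowColCount A i y := by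
      rwa [sum_sum_rowColCount, sum_const, card_univ, smul_eq_mul]
    exact (sum_eq_sum_iff_of_le fun i _ => hrow_le i).mp (le_antisymm hle_sum hge_sum) k
      (mem_univ k)
  exact exists_eq_ite_of_sum_eq (hle k) hα.pos hrow_eq

def arrayCode {ι α : Type*} [Fintype ι] [DecidableEq ι] [Fintype α] [DecidableEq α]
    (A : ι → ι → Finset α) : Finset (α ⊕ ι → Bool) :=
  (filledCells A).image fun p => ofSupports (A p.1 p.2) {p.1, p.2}

namespace IsSAS

variable {s v : ℕ} {A : Fin s → Fin s → Finset (Fin v)}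

lemma rowColCount_le_one (h : IsSAS s v A) (k : Fin s) (y : Fin v) :
    rowColCount A k y ≤ 1 := by
  obtain ⟨x, hx⟩ := h.2.2.2.2 k
  rw [rowColCount, hx y]
  split_ifs <;> omega

lemma card_eq_two_of_mem_filledCells (h : IsSAS s v A) {p : Fin s × Fin s}
    (hp : p ∈ filledCells A) : #(A p.1 p.2) = 2 :=
  (h.2.2.1 p.1 p.2).resolve_left (mem_filter.mp hp).2.ne_empty

lemma fst_ne_snd_of_mem_filledCells (h : IsSAS s v A) {p : Fin s × Fin s}
    (hp : p ∈ filledCells A) : p.1 ≠ p.2 := by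
  intro hp12
  have := (mem_filter.mp hp).2
  rw [hp12, h.2.1] at this
  exact not_nonempty_empty this

lemma eq_of_two_le_card_inter (h : IsSAS s v A) {p q : Fin s × Fin s}
    (hpq : 2 ≤ #(A p.1 p.2 ∩ A q.1 q.2)) : p = q := by
  obtain ⟨a, ha, b, hb, hab⟩ := one_lt_card.mp hpq
  rw [mem_inter] at ha hb
  obtain ⟨h1, h2⟩ := h.2.2.2.1 p.1 p.2 q.1 q.2 a b hab ha.1 hb.1 ha.2 hb.2
  exact Prod.ext h1 h2

lemma card_inter_pair_le_one (h : IsSAS s v A) {p q : Fin s × Fin s}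
    (hp : p ∈ filledCells A) (hq : q ∈ filledCells A) (hpq : p ≠ q) :
    #({p.1, p.2} ∩ {q.1, q.2} : Finset (Fin s)) ≤ 1 := by
  by_contra! hlt
  have hpair := Finset.eq_of_two_le_card_inter (card_pair (h.fst_ne_snd_of_mem_filledCells hp))
    (card_pair (h.fst_ne_snd_of_mem_filledCells hq)) hlt
  rw [← coe_inj, coe_pair, coe_pair, Set.pair_eq_pair_iff] at hpair
  rcases hpair with ⟨h1, h2⟩ | ⟨h1, h2⟩
  · exact hpq (Prod.ext h1 h2)
  · rcases h.1 p.1 p.2 (h.fst_ne_snd_of_mem_filledCells hp) with h' | h'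
    · exact (mem_filter.mp hp).2.ne_empty h'
    · exact (mem_filter.mp hq).2.ne_empty (by rw [← h1, ← h2, h'])

lemma card_inter_add_card_inter_le_one (h : IsSAS s v A) {p q : Fin s × Fin s}
    (hp : p ∈ filledCells A) (hq : q ∈ filledCells A) (hpq : p ≠ q) :
    #(A p.1 p.2 ∩ A q.1 q.2) + #({p.1, p.2} ∩ {q.1, q.2} : Finset (Fin s)) ≤ 1 := by
  have hpoints : #(A p.1 p.2 ∩ A q.1 q.2) ≤ 1 := by
    by_contra! hlt
    exact hpq (h.eq_of_two_le_card_inter hlt)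
  have hindices := h.card_inter_pair_le_one hp hq hpq
  -- a point and an index shared by two cells would be counted twice in that row and column
  have hnot_both : #(A p.1 p.2 ∩ A q.1 q.2) = 0 ∨
      #({p.1, p.2} ∩ {q.1, q.2} : Finset (Fin s)) = 0 := by
    by_contra! hpos
    obtain ⟨y, hy⟩ := card_pos.mp (Nat.pos_of_ne_zero hpos.1)
    obtain ⟨k, hk⟩ := card_pos.mp (Nat.pos_of_ne_zero hpos.2)
    simp only [mem_inter, mem_insert, mem_singleton] at hy hk
    have htwo : 1 < rowColCount A k y := by
      rw [rowColCount_eq_card_filter h.2.1]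
      refine one_lt_card.mpr ⟨p, ?_, q, ?_, hpq⟩ <;> simp only [mem_filter, mem_univ, true_and]
      · exact ⟨hy.1, hk.1.imp Eq.symm Eq.symm⟩
      · exact ⟨hy.2, hk.2.imp Eq.symm Eq.symm⟩
    exact absurd (h.rowColCount_le_one k y) (not_le.mpr htwo)
  omega

lemma isMCWC_arrayCode (h : IsSAS s v A) : IsMCWC (arrayCode A) := by
  refine .of_card_inter_add_card_inter_le_one ?_ ?_ ?_
  · intro c hc
    obtain ⟨p, hp, rfl⟩ := mem_image.mp hc
    simpa using h.card_eq_two_of_mem_filledCells hp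
  · intro c hc
    obtain ⟨p, hp, rfl⟩ := mem_image.mp hc
    simpa using card_pair (h.fst_ne_snd_of_mem_filledCells hp)
  · intro u hu w hw huw
    obtain ⟨p, hp, rfl⟩ := mem_image.mp hu
    obtain ⟨q, hq, rfl⟩ := mem_image.mp hw
    simpa using h.card_inter_add_card_inter_le_one hp hq (by rintro rfl; exact huw rfl)

lemma card_arrayCode (h : IsSAS s v A) : #(arrayCode A) = #(filledCells A) := by
  refine card_image_of_injOn fun p hp q hq hpq => h.eq_of_two_le_card_inter ?_
  have hcell : A p.1 p.2 = A q.1 q.2 := by simpa using congrArg leftSupport hpq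
  rw [← hcell, inter_self, h.card_eq_two_of_mem_filledCells hp]

lemma four_mul_card_arrayCode (h : IsSAS s v A) : 4 * #(arrayCode A) = s * (v - 1) := by
  have hrow : ∀ k, ∑ y, rowColCount A k y = v - 1 := fun k => by
    obtain ⟨x, hx⟩ := h.2.2.2.2 k
    calc ∑ y, rowColCount A k y = ∑ y, if y = x then 0 else 1 := sum_congr rfl fun y _ => hx y
      _ = v - 1 := by rw [sum_ite_eq_zero_one, Fintype.card_fin]
  calc 4 * #(arrayCode A) = 2 * ∑ i, ∑ j, #(A i j) := by
        rw [h.card_arrayCode, sum_sum_card_eq_two_mul_card_filledCells h.2.2.1]; ring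
    _ = ∑ k, ∑ y, rowColCount A k y := sum_sum_rowColCount.symm
    _ = s * (v - 1) := by simp [hrow]

end IsSAS

def codeArray {α ι : Type*} [Fintype α] [DecidableEq α] [Fintype ι] [LinearOrder ι]
    (C : Finset (α ⊕ ι → Bool)) (i j : ι) : Finset α :=
  if i < j then {c ∈ C | rightSupport c = {i, j}}.biUnion leftSupport else ∅

section CodeArray

variable {α ι : Type*} [Fintype α] [DecidableEq α] [Fintype ι] [LinearOrder ι]
  {C : Finset (α ⊕ ι → Bool)}

lemma mem_codeArray {i j : ι} {y : α} :
    y ∈ codeArray C i j ↔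
      i < j ∧ ∃ c ∈ C, rightSupport c = {i, j} ∧ y ∈ leftSupport c := by
  unfold codeArray
  split_ifs with h <;> simp [h, and_assoc]

lemma codeArray_self (i : ι) : codeArray C i i = ∅ := by
  simp [codeArray]

lemma codeArray_eq_empty_or_swap_eq_empty {i j : ι} (hij : i ≠ j) :
    codeArray C i j = ∅ ∨ codeArray C j i = ∅ := by
  rcases hij.lt_or_gt with h | h
  · exact .inr (if_neg h.asymm)
  · exact .inl (if_neg h.asymm)

namespace IsMCWC

lemma codeArray_eq (hC : IsMCWC C) {c : α ⊕ ι → Bool} (hc : c ∈ C) {i j : ι} (hij : i < j)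
    (hQ : rightSupport c = {i, j}) : codeArray C i j = leftSupport c := by
  have hfiber : {c' ∈ C | rightSupport c' = {i, j}} = {c} := by
    refine eq_singleton_iff_unique_mem.mpr ⟨mem_filter.mpr ⟨hc, hQ⟩, fun c' hc' => ?_⟩
    obtain ⟨hc'C, hQ'⟩ := mem_filter.mp hc'
    refine hC.eq_of_two_le_card_inter_add_card_inter hc'C hc ?_
    rw [hQ', hQ, inter_self, card_pair hij.ne]
    omega
  rw [codeArray, if_pos hij, hfiber, singleton_biUnion]

lemma exists_of_mem_codeArray (hC : IsMCWC C) {i j : ι} {y : α} (hy : y ∈ codeArray C i j) :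
    ∃ c ∈ C, i < j ∧ rightSupport c = {i, j} ∧ codeArray C i j = leftSupport c := by
  obtain ⟨hij, c, hc, hQ, -⟩ := mem_codeArray.mp hy
  exact ⟨c, hc, hij, hQ, hC.codeArray_eq hc hij hQ⟩

lemma codeArray_eq_empty_or_card_eq_two (hC : IsMCWC C) (i j : ι) :
    codeArray C i j = ∅ ∨ #(codeArray C i j) = 2 := by
  obtain h | ⟨y, hy⟩ := (codeArray C i j).eq_empty_or_nonempty
  · exact .inl h
  · obtain ⟨c, hc, -, -, hA⟩ := hC.exists_of_mem_codeArray hy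
    exact .inr (hA ▸ hC.card_leftSupport c hc)

lemma eq_of_mem_codeArray (hC : IsMCWC C) {i j i' j' : ι} {y y' : α}
    (hy : y ∈ codeArray C i j) (hy' : y' ∈ codeArray C i' j')
    (h : 2 ≤ #(codeArray C i j ∩ codeArray C i' j') + #({i, j} ∩ {i', j'} : Finset ι)) :
    i = i' ∧ j = j' := by
  obtain ⟨c, hc, hij, hQ, hA⟩ := hC.exists_of_mem_codeArray hy
  obtain ⟨c', hc', hij', hQ', hA'⟩ := hC.exists_of_mem_codeArray hy'
  rw [hA, hA', ← hQ, ← hQ'] at h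
  obtain rfl := hC.eq_of_two_le_card_inter_add_card_inter hc hc' h
  exact pair_eq_pair_of_lt hij hij' (hQ.symm.trans hQ')

lemma card_le_card_filledCells_codeArray (hC : IsMCWC C) :
    #C ≤ #(filledCells (codeArray C)) := by
  have hinj : Set.InjOn rightSupport (C : Set (α ⊕ ι → Bool)) := fun c hc c' hc' hQ => by
    refine hC.eq_of_two_le_card_inter_add_card_inter hc hc' ?_
    rw [hQ, inter_self, hC.card_rightSupport c' hc']
    omega
  rw [← card_image_of_injOn hinj]
  refine card_le_card_of_surjOn (fun p => {p.1, p.2}) fun Q hQ => ?_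
  obtain ⟨c, hc, rfl⟩ := mem_image.mp hQ
  obtain ⟨a, b, hab, hQc⟩ := exists_lt_pair_eq (hC.card_rightSupport c hc)
  refine ⟨(a, b), ?_, hQc.symm⟩
  simp [filledCells, hC.codeArray_eq hc hab hQc, ← card_pos, hC.card_leftSupport c hc]

lemma rowColCount_codeArray_le_one (hC : IsMCWC C) (k : ι) (y : α) :
    rowColCount (codeArray C) k y ≤ 1 := by
  rw [rowColCount_eq_card_filter codeArray_self]
  refine card_le_one.mpr ?_
  rintro ⟨i, j⟩ hp ⟨i', j'⟩ hq
  simp only [mem_filter, mem_univ, true_and] at hp hq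
  have hy := card_pos.mpr ⟨y, mem_inter.mpr ⟨hp.1, hq.1⟩⟩
  have hk : 0 < #({i, j} ∩ {i', j'} : Finset ι) :=
    card_pos.mpr ⟨k, by rcases hp.2 with rfl | rfl <;> rcases hq.2 with h | h <;> simp [h]⟩
  obtain ⟨rfl, rfl⟩ := hC.eq_of_mem_codeArray hp.1 hq.1 (by omega)
  rfl

end IsMCWC

end CodeArray

lemma IsMCWC.isSAS_codeArray {s v : ℕ} {C : Finset (Fin v ⊕ Fin s → Bool)} (hC : IsMCWC C)
    (hv : Odd v) (hsize : s * (v - 1) ≤ 4 * #C) : IsSAS s v (codeArray C) := by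
  have hcard := hC.codeArray_eq_empty_or_card_eq_two
  have hsum : Fintype.card (Fin s) * (Fintype.card (Fin v) - 1)
      ≤ 2 * ∑ i, ∑ j, #(codeArray C i j) := by
    rw [sum_sum_card_eq_two_mul_card_filledCells hcard, Fintype.card_fin, Fintype.card_fin]
    have := hC.card_le_card_filledCells_codeArray
    omega
  refine ⟨fun i j => codeArray_eq_empty_or_swap_eq_empty, codeArray_self, hcard,
    fun i j i' j' a b hab ha hb ha' hb' => hC.eq_of_mem_codeArray ha ha' ?_,
    exists_rowColCount_eq_ite (by rwa [Fintype.card_fin]) hcard hC.rowColCount_codeArray_le_one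
      hsum⟩
  have := one_lt_card.mpr ⟨a, mem_inter.mpr ⟨ha, ha'⟩, b, mem_inter.mpr ⟨hb, hb'⟩, hab⟩
  omega

theorem mcwc_iff_sas_general (v s : ℕ) (hv : v % 4 = 1) :
    (∃ C : Finset (Fin v ⊕ Fin s → Bool),
      (∀ c ∈ C, (univ.filter (fun i : Fin v => c (Sum.inl i) = true)).card = 2) ∧
      (∀ c ∈ C, (univ.filter (fun i : Fin s => c (Sum.inr i) = true)).card = 2) ∧
      (∀ u ∈ C, ∀ w ∈ C, u ≠ w → 6 ≤ hammingDist u w) ∧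
      4 * C.card = s * (v - 1)) ↔
    (∃ A : Fin s → Fin s → Finset (Fin v), IsSAS s v A) := by
  constructor
  · rintro ⟨C, hP, hQ, hd, hsize⟩
    exact ⟨codeArray C, IsMCWC.isSAS_codeArray ⟨hP, hQ, hd⟩ (Nat.odd_iff.mpr (by omega))
      hsize.ge⟩
  · rintro ⟨A, hA⟩
    obtain ⟨hP, hQ, hd⟩ := hA.isMCWC_arrayCode
    exact ⟨arrayCode A, hP, hQ, hd, hA.four_mul_card_arrayCode⟩

/-- For `v ≡ 1 (mod 4)` and odd `s` with `v ≤ s ≤ 2v-1`, there exists an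
`MCWC(2,v;2,s;6)` of size `s(v-1)/4` if and only if an `SAS(s,v)` exists. -/
theorem mcwc_iff_sas (v s : ℕ) (hv : v % 4 = 1) (hs : s % 2 = 1)
    (h1 : v ≤ s) (h2 : s ≤ 2 * v - 1) :
    (∃ C : Finset (Fin v ⊕ Fin s → Bool),
      (∀ c ∈ C, (univ.filter (fun i : Fin v => c (Sum.inl i) = true)).card = 2) ∧
      (∀ c ∈ C, (univ.filter (fun i : Fin s => c (Sum.inr i) = true)).card = 2) ∧
      (∀ u ∈ C, ∀ w ∈ C, u ≠ w → 6 ≤ hammingDist u w) ∧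
      4 * C.card = s * (v - 1)) ↔
    (∃ A : Fin s → Fin s → Finset (Fin v), IsSAS s v A) :=
  mcwc_iff_sas_general v s hv
end

section
/- Let m, n, d, w be positive integers with w ≤ n. Then M(m,n,d,w) ≤ ⌊(n/w)^m · M(m,n-1,d,w-1)⌋, where M denotes the maximum size of a multiply constant-weight code MCWC(m,n,d,w). -/
open Finset

lemma mcwc_bddAbove (m n d w : ℕ) :
    BddAbove {k | ∃ C : Finset (Fin m × Fin n → Bool),
      (∀ c ∈ C, ∀ j : Fin m, (univ.filter fun i : Fin n => c (j, i) = true).card = w) ∧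
      (∀ u ∈ C, ∀ v ∈ C, u ≠ v → d ≤ hammingDist u v) ∧ C.card = k} := by
  refine ⟨Fintype.card (Fin m × Fin n → Bool), ?_⟩
  rintro k ⟨C, -, -, rfl⟩
  simpa using C.card_le_univ

/-- Shortening: the subcode of codewords having a `1` at position `t j` in each block `j`,
with those positions deleted, is an `MCWC(m,n,d,w)`. -/
lemma mcwc_shorten (m n d w : ℕ) (C : Finset (Fin m × Fin (n + 1) → Bool))
    (hWt : ∀ c ∈ C, ∀ j : Fin m,
      (univ.filter fun i : Fin (n + 1) => c (j, i) = true).card = w + 1)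
    (hDist : ∀ u ∈ C, ∀ v ∈ C, u ≠ v → d ≤ hammingDist u v)
    (t : Fin m → Fin (n + 1)) :
    (C.filter fun c => ∀ j, c (j, t j) = true).card ≤ Mmcwc m n d w := by
  classical
  set Ct := C.filter fun c => ∀ j, c (j, t j) = true with hCt
  set sh : (Fin m × Fin (n + 1) → Bool) → (Fin m × Fin n → Bool) :=
    fun c p => c (p.1, (t p.1).succAbove p.2) with hsh
  have hone : ∀ c ∈ Ct, ∀ j, c (j, t j) = true := by
    intro c hc j; exact (mem_filter.mp hc).2 j
  have hmemC : ∀ c ∈ Ct, c ∈ C := fun c hc => (mem_filter.mp hc).1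
  have hinj : Set.InjOn sh Ct := by
    intro c hc c' hc' he
    funext p
    obtain ⟨j, i⟩ := p
    by_cases hi : i = t j
    · rw [hi, hone c hc j, hone c' hc' j]
    · obtain ⟨i', hi'⟩ := Fin.exists_succAbove_eq hi
      have := congrFun he (j, i')
      simpa [hsh, hi'] using this
  set D := Ct.image sh with hD
  have hcard : Ct.card = D.card := (card_image_of_injOn hinj).symm
  rw [hcard]
  apply le_csSup (mcwc_bddAbove m n d w)
  refine ⟨D, ?_, ?_, rfl⟩
  · -- weights
    intro c' hc' j
    obtain ⟨c, hc, rfl⟩ := mem_image.mp hc'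
    have himg : (univ.filter fun i : Fin n => sh c (j, i) = true).image (t j).succAbove
        = (univ.filter fun i : Fin (n + 1) => c (j, i) = true).erase (t j) := by
      ext x
      simp only [mem_image, mem_filter, mem_univ, true_and, mem_erase, hsh]
      constructor
      · rintro ⟨i, hci, rfl⟩
        exact ⟨Fin.succAbove_ne _ _, hci⟩
      · rintro ⟨hx, hcx⟩
        obtain ⟨i, rfl⟩ := Fin.exists_succAbove_eq hx
        exact ⟨i, hcx, rfl⟩
    have := congrArg Finset.card himg
    rw [card_image_of_injective _ (Fin.succAbove_right_injective)] at this
    rw [this, card_erase_of_mem, hWt c (hmemC c hc) j]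
    · simp
    · simp [hone c hc j]
  · -- distance
    intro u' hu' v' hv' hne
    obtain ⟨u, hu, rfl⟩ := mem_image.mp hu'
    obtain ⟨v, hv, rfl⟩ := mem_image.mp hv'
    have huv : u ≠ v := by rintro rfl; exact hne rfl
    refine le_trans (hDist u (hmemC u hu) v (hmemC v hv) huv) ?_
    show hammingDist u v ≤ hammingDist (sh u) (sh v)
    unfold hammingDist
    apply card_le_card_of_surjOn (fun p : Fin m × Fin n => (p.1, (t p.1).succAbove p.2))
    rintro ⟨j, i⟩ hq
    simp only [coe_filter, Set.mem_setOf_eq, mem_univ, true_and] at hq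
    have hi : i ≠ t j := by
      intro h
      rw [h, hone u hu j, hone v hv j] at hq
      exact hq rfl
    obtain ⟨i', rfl⟩ := Fin.exists_succAbove_eq hi
    refine ⟨(j, i'), ?_, rfl⟩
    simp only [coe_filter, Set.mem_setOf_eq, mem_univ, true_and, hsh]
    exact hq

/-- Double counting: summing subcode sizes over all choices of fixed positions. -/
lemma mcwc_count (m n w : ℕ) (C : Finset (Fin m × Fin (n + 1) → Bool))
    (hWt : ∀ c ∈ C, ∀ j : Fin m,
      (univ.filter fun i : Fin (n + 1) => c (j, i) = true).card = w + 1) :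
    C.card * (w + 1) ^ m
      = ∑ t : Fin m → Fin (n + 1), (C.filter fun c => ∀ j, c (j, t j) = true).card := by
  classical
  have h1 : ∀ t : Fin m → Fin (n + 1),
      (C.filter fun c => ∀ j, c (j, t j) = true).card
        = ∑ c ∈ C, if (∀ j, c (j, t j) = true) then 1 else 0 := by
    intro t; rw [card_filter]
  rw [Finset.sum_congr rfl fun t _ => h1 t, Finset.sum_comm]
  have h2 : ∀ c ∈ C, ∑ t : Fin m → Fin (n + 1), (if (∀ j, c (j, t j) = true) then 1 else 0)
      = (w + 1) ^ m := by
    intro c hc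
    rw [← card_filter]
    have h3 : (univ.filter fun t : Fin m → Fin (n + 1) => ∀ j, c (j, t j) = true)
        = Fintype.piFinset fun j => univ.filter fun i : Fin (n + 1) => c (j, i) = true := by
      ext t
      simp [Fintype.mem_piFinset]
    rw [h3, Fintype.card_piFinset]
    simp [hWt c hc]
  rw [Finset.sum_congr rfl h2, Finset.sum_const, smul_eq_mul]

/-- Johnson-type recursive bound for multiply constant-weight codes:
`M(m,n,d,w) ≤ ⌊(n/w)^m · M(m,n-1,d,w-1)⌋`. -/
theorem mcwc_johnson_recursion (m n d w : ℕ)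
    (hm : 0 < m) (hd : 0 < d) (hw : 0 < w) (hwn : w ≤ n) :
    Mmcwc m n d w ≤ ⌊((n : ℝ) / (w : ℝ)) ^ m * (Mmcwc m (n - 1) d (w - 1) : ℝ)⌋₊ := by
  classical
  obtain ⟨n₀, rfl⟩ : ∃ n₀, n = n₀ + 1 := ⟨n - 1, (Nat.succ_pred_eq_of_pos (hw.trans_le hwn)).symm⟩
  obtain ⟨w₀, rfl⟩ : ∃ w₀, w = w₀ + 1 := ⟨w - 1, (Nat.succ_pred_eq_of_pos hw).symm⟩
  simp only [Nat.add_sub_cancel]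
  set M' := Mmcwc m n₀ d w₀ with hM'
  have hnonempty : (0 : ℕ) ∈ {k | ∃ C : Finset (Fin m × Fin (n₀ + 1) → Bool),
      (∀ c ∈ C, ∀ j : Fin m,
        (univ.filter fun i : Fin (n₀ + 1) => c (j, i) = true).card = w₀ + 1) ∧
      (∀ u ∈ C, ∀ v ∈ C, u ≠ v → d ≤ hammingDist u v) ∧ C.card = k} := by
    exact ⟨∅, by simp, by simp, by simp⟩
  apply csSup_le ⟨0, hnonempty⟩
  rintro k ⟨C, hWt, hDist, rfl⟩
  -- key counting inequality
  have hkey : C.card * (w₀ + 1) ^ m ≤ (n₀ + 1) ^ m * M' := by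
    rw [mcwc_count m n₀ w₀ C hWt]
    calc ∑ t : Fin m → Fin (n₀ + 1), (C.filter fun c => ∀ j, c (j, t j) = true).card
        ≤ ∑ _t : Fin m → Fin (n₀ + 1), M' :=
          Finset.sum_le_sum fun t _ => mcwc_shorten m n₀ d w₀ C hWt hDist t
      _ = (n₀ + 1) ^ m * M' := by
          rw [Finset.sum_const, smul_eq_mul, card_univ, Fintype.card_fun]
          simp
  apply Nat.le_floor
  have hwpos : (0 : ℝ) < ((w₀ : ℝ) + 1) ^ m := by positivity
  rw [div_pow, div_mul_eq_mul_div]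
  push_cast
  rw [le_div_iff₀ hwpos]
  calc ((C.card : ℝ)) * ((w₀ : ℝ) + 1) ^ m
      = ((C.card * (w₀ + 1) ^ m : ℕ) : ℝ) := by push_cast; ring
    _ ≤ (((n₀ + 1) ^ m * M' : ℕ) : ℝ) := by exact_mod_cast hkey
    _ = ((n₀ : ℝ) + 1) ^ m * (M' : ℝ) := by push_cast; ring
end

section
/- For m ≥ 1 and 0 ≤ w ≤ n/2, if there exists a spherical code of dimension m(n-1) with maximum cosine s = 1 - dn/(mw(n-w)) of size N, and s < 0 with s ≥ -1/(m(n-1)), then M(m,n,2d,w) ≤ m(n-1)+1; this uses the fact that A_S(k, s) = k+1 whenever -1/k ≤ s < 0, where A_S(k,s) is the maximum size of a spherical code in dimension k with all pairwise cosines at most s. -/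
open Finset
open scoped RealInnerProductSpace

/-- Maximum size of a spherical code in dimension `k` with all pairwise cosines
at most `s`. -/
noncomputable def Asph (k : ℕ) (s : ℝ) : ℕ :=
  sSup {N | ∃ f : Fin N → EuclideanSpace ℝ (Fin k), Function.Injective f ∧
    (∀ a, ‖f a‖ = 1) ∧ ∀ a b, a ≠ b → ⟪f a, f b⟫ ≤ s}

/-!
Subtracting the mean `w / n` from the 0/1 coordinates of a codeword puts it in the
`m (n - 1)`-dimensional space of vectors with zero block sums, on the sphere of squared radius
`R = m w (n - w) / n`, and turns Hamming distance into squared Euclidean distance. Distance at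
least `2 d` therefore becomes cosine at most `1 - d / R = s` after normalisation.

If `s < 0`, the vectors have pairwise negative inner products, and any family of such vectors in
a `k`-dimensional space has at most `k + 1` members: all but one of them are linearly independent,
since a linear relation splits into two nonnegative combinations that are equal and have
nonpositive inner product with each other, hence vanish. The bound `k + 1` is attained at cosine
`-1 / k` by the regular simplex, which is the image of the weight-one code of length `k + 1`.
-/

open Module

section ObtuseFamily

variable {E : Type*} [NormedAddCommGroup E] [InnerProductSpace ℝ E]

theorem eq_zero_of_sum_smul_eq_zero_of_inner_neg {ι : Type*} {v : ι → E} {u : E}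
    (hu : ∀ i, ⟪v i, u⟫ < 0) {s : Finset ι} {a : ι → ℝ} (ha : ∀ i, 0 ≤ a i)
    (h : ∑ i ∈ s, a i • v i = 0) : ∀ i ∈ s, a i = 0 := by
  have hsum : ∑ i ∈ s, a i * ⟪v i, u⟫ = 0 := by
    simpa [sum_inner, real_inner_smul_left] using congrArg (⟪·, u⟫) h
  intro i hi
  have := (sum_eq_zero_iff_of_nonpos fun j _ =>
    mul_nonpos_of_nonneg_of_nonpos (ha j) (hu j).le).1 hsum i hi
  exact (mul_eq_zero.1 this).resolve_right (hu i).ne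

theorem linearIndependent_of_pairwise_inner_nonpos {ι : Type*} {v : ι → E} {u : E}
    (hv : Pairwise fun i j => ⟪v i, v j⟫ ≤ 0) (hu : ∀ i, ⟪v i, u⟫ < 0) :
    LinearIndependent ℝ v := by
  rw [linearIndependent_iff']
  intro s g hg
  have hx : ∑ i ∈ s, (g i)⁺ • v i = ∑ i ∈ s, (g i)⁻ • v i := by
    rw [← sub_eq_zero, ← sum_sub_distrib]
    simpa only [← sub_smul, posPart_sub_negPart] using hg
  have hxx : ⟪∑ i ∈ s, (g i)⁺ • v i, ∑ i ∈ s, (g i)⁺ • v i⟫ ≤ 0 := by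
    rw [congrArg (⟪∑ i ∈ s, (g i)⁺ • v i, ·⟫) hx, sum_inner]
    refine sum_nonpos fun i _ => ?_
    rw [inner_sum]
    refine sum_nonpos fun j _ => ?_
    rw [real_inner_smul_left, real_inner_smul_right]
    rcases eq_or_ne i j with rfl | hij
    · rcases le_total (g i) 0 with h | h <;> simp [h]
    · exact mul_nonpos_of_nonneg_of_nonpos (posPart_nonneg _)
        (mul_nonpos_of_nonneg_of_nonpos (negPart_nonneg _) (hv hij))
  have hplus := real_inner_self_nonpos.1 hxx
  intro i hi
  rw [← posPart_sub_negPart (g i),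
    eq_zero_of_sum_smul_eq_zero_of_inner_neg hu (fun _ => posPart_nonneg _) hplus i hi,
    eq_zero_of_sum_smul_eq_zero_of_inner_neg hu (fun _ => negPart_nonneg _) (hx ▸ hplus) i hi,
    sub_zero]

theorem card_le_finrank_add_one_of_pairwise_inner_neg [FiniteDimensional ℝ E] {ι : Type*}
    [Fintype ι] {v : ι → E} (hv : Pairwise fun i j => ⟪v i, v j⟫ < 0) :
    Fintype.card ι ≤ finrank ℝ E + 1 := by
  classical
  rcases isEmpty_or_nonempty ι with hι | ⟨⟨i₀⟩⟩
  · simp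
  have hli : LinearIndependent ℝ fun i : {i // i ≠ i₀} => v i :=
    linearIndependent_of_pairwise_inner_nonpos (u := v i₀)
      (fun i j hij => (hv (Subtype.coe_injective.ne hij)).le) fun i => hv i.2
  have := hli.fintype_card_le_finrank
  rw [Fintype.card_subtype_compl, Fintype.card_subtype_eq] at this
  omega

end ObtuseFamily

section SphericalCode

variable {k : ℕ} {s : ℝ}

theorem card_le_succ_of_pairwise_inner_le (hs : s < 0) {ι : Type*} [Fintype ι]
    {f : ι → EuclideanSpace ℝ (Fin k)} (hf : Pairwise fun a b => ⟪f a, f b⟫ ≤ s) :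
    Fintype.card ι ≤ k + 1 := by
  simpa using card_le_finrank_add_one_of_pairwise_inner_neg fun a b hab => (hf hab).trans_lt hs

theorem Asph_le_succ (hs : s < 0) : Asph k s ≤ k + 1 :=
  csSup_le' fun _ ⟨_, _, _, hf⟩ => by simpa using card_le_succ_of_pairwise_inner_le hs hf

theorem card_le_Asph (hs : s < 0) {ι : Type*} [Fintype ι] {f : ι → EuclideanSpace ℝ (Fin k)}
    (hf₁ : ∀ a, ‖f a‖ = 1) (hf : Pairwise fun a b => ⟪f a, f b⟫ ≤ s) :
    Fintype.card ι ≤ Asph k s := by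
  have hinj : Function.Injective f := fun a b hab => by
    by_contra hne
    have : ⟪f a, f b⟫ ≤ s := hf hne
    rw [hab, real_inner_self_eq_norm_sq, hf₁] at this
    linarith
  let e := (Fintype.equivFin ι).symm
  have hbdd : BddAbove {N | ∃ g : Fin N → EuclideanSpace ℝ (Fin k), Function.Injective g ∧
      (∀ a, ‖g a‖ = 1) ∧ ∀ a b, a ≠ b → ⟪g a, g b⟫ ≤ s} :=
    ⟨k + 1, fun _ ⟨_, _, _, hg⟩ => by simpa using card_le_succ_of_pairwise_inner_le hs hg⟩
  exact le_csSup hbdd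
    ⟨f ∘ e, hinj.comp e.injective, fun a => hf₁ (e a),
      fun a b hab => hf (e.injective.ne hab)⟩

end SphericalCode

section CenteredIndicator

variable {ι : Type*}

noncomputable def centeredIndicator (t : ℝ) (c : ι → Bool) : EuclideanSpace ℝ ι :=
  WithLp.toLp 2 fun p => (if c p then 1 else 0) - t

@[simp]
theorem centeredIndicator_apply (t : ℝ) (c : ι → Bool) (p : ι) :
    centeredIndicator t c p = (if c p then 1 else 0) - t :=
  rfl

variable [Fintype ι]

theorem norm_centeredIndicator_sub_sq (t : ℝ) (u v : ι → Bool) :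
    ‖centeredIndicator t u - centeredIndicator t v‖ ^ 2 = hammingDist u v := by
  rw [EuclideanSpace.real_norm_sq_eq, hammingDist, natCast_card_filter]
  refine sum_congr rfl fun p _ => ?_
  simp only [PiLp.sub_apply, centeredIndicator_apply, sub_sub_sub_cancel_right]
  cases u p <;> cases v p <;> norm_num

theorem norm_centeredIndicator_sq (t : ℝ) (c : ι → Bool) :
    ‖centeredIndicator t c‖ ^ 2 = (1 - 2 * t) * #{p | c p} + Fintype.card ι * t ^ 2 := by
  have hp (p : ι) :
      (centeredIndicator t c p) ^ 2 = (1 - 2 * t) * (if c p then 1 else 0) + t ^ 2 := by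
    cases hc : c p <;> simp [hc]
    ring
  rw [EuclideanSpace.real_norm_sq_eq]
  simp only [hp, sum_add_distrib, ← mul_sum, sum_boole, sum_const, card_univ, nsmul_eq_mul]

end CenteredIndicator

section BlockSum

variable {m n : ℕ}

noncomputable def blockSum (m n : ℕ) :
    EuclideanSpace ℝ (Fin m × Fin n) →ₗ[ℝ] (Fin m → ℝ) where
  toFun x j := ∑ i, x (j, i)
  map_add' x y := by funext j; simp [sum_add_distrib]
  map_smul' c x := by funext j; simp [mul_sum]

theorem blockSum_surjective (hn : 0 < n) : Function.Surjective (blockSum m n) := fun y =>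
  ⟨WithLp.toLp 2 fun p => if p.2 = ⟨0, hn⟩ then y p.1 else 0, by ext j; simp [blockSum]⟩

theorem finrank_ker_blockSum (hn : 0 < n) :
    finrank ℝ (LinearMap.ker (blockSum m n)) = m * (n - 1) := by
  have := (blockSum m n).finrank_range_add_finrank_ker
  rw [LinearMap.range_eq_top.2 (blockSum_surjective hn), finrank_top, finrank_euclideanSpace,
    Module.finrank_fintype_fun_eq_card] at this
  simp only [Fintype.card_prod, Fintype.card_fin] at this
  rw [Nat.mul_sub_one]
  omega

variable {w : ℕ} {c : Fin m × Fin n → Bool}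

theorem card_filter_eq_mul_of_blockWeight (hc : ∀ j, #{i | c (j, i)} = w) :
    #{p | c p} = m * w := by
  simp only [card_filter, Fintype.sum_prod_type]
  simp [hc]

theorem centeredIndicator_mem_ker_blockSum (hc : ∀ j, #{i | c (j, i)} = w) :
    centeredIndicator (w / n) c ∈ LinearMap.ker (blockSum m n) := by
  ext j
  obtain rfl | hn := eq_or_ne n 0
  · simp [blockSum]
  simp [blockSum, sum_sub_distrib, hc, mul_div_cancel₀ (w : ℝ) (Nat.cast_ne_zero.2 hn)]

theorem norm_centeredIndicator_sq_of_blockWeight (hn : n ≠ 0) (hc : ∀ j, #{i | c (j, i)} = w) :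
    ‖centeredIndicator (w / n) c‖ ^ 2 = m * w * (n - w) / n := by
  rw [norm_centeredIndicator_sq, card_filter_eq_mul_of_blockWeight hc]
  simp only [Fintype.card_prod, Fintype.card_fin, Nat.cast_mul]
  field_simp
  ring

end BlockSum

theorem exists_sphericalCode_of_blockWeight {ι : Type*} {m n w d : ℕ} (hm : 0 < m) (hw : 0 < w)
    (hwn : w < n) (c : ι → Fin m × Fin n → Bool) (hc : ∀ a j, #{i | c a (j, i)} = w)
    (hd : Pairwise fun a b => 2 * d ≤ hammingDist (c a) (c b)) :
    ∃ f : ι → EuclideanSpace ℝ (Fin (m * (n - 1))), (∀ a, ‖f a‖ = 1) ∧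
      Pairwise fun a b => ⟪f a, f b⟫ ≤ 1 - d * n / (m * w * (n - w)) := by
  have hwn' : (w : ℝ) < n := by exact_mod_cast hwn
  set R : ℝ := m * w * (n - w) / n
  have hn : 0 < n := by omega
  have hR : 0 < R := div_pos (mul_pos (by positivity) (sub_pos.2 hwn')) (by positivity)
  let x a := centeredIndicator (w / n) (c a)
  have hx a : ‖x a‖ ^ 2 = R := norm_centeredIndicator_sq_of_blockWeight hn.ne' (hc a)
  let V := LinearMap.ker (blockSum m n)
  have hxV a : (√R)⁻¹ • x a ∈ V := V.smul_mem _ (centeredIndicator_mem_ker_blockSum (hc a))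
  let e := ((stdOrthonormalBasis ℝ V).reindex (finCongr (finrank_ker_blockSum hn))).repr
  refine ⟨fun a => e ⟨_, hxV a⟩, fun a => ?_, fun a b hab => ?_⟩
  · have : ‖x a‖ = √R := by rw [← hx a, Real.sqrt_sq (norm_nonneg _)]
    rw [LinearIsometryEquiv.norm_map, Submodule.coe_norm, norm_smul, this, norm_inv,
      Real.norm_of_nonneg (Real.sqrt_nonneg _), inv_mul_cancel₀ (Real.sqrt_pos.2 hR).ne']
  · have hd' : (2 * d : ℝ) ≤ hammingDist (c a) (c b) := by exact_mod_cast hd hab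
    have hxx : ⟪x a, x b⟫ ≤ R - d := by
      have := norm_sub_sq_real (x a) (x b)
      rw [hx, hx, norm_centeredIndicator_sub_sq] at this
      linarith
    have hdR : (d : ℝ) * n / (m * w * (n - w)) = d / R := by
      rw [div_div_eq_mul_div]
    dsimp only
    rw [LinearIsometryEquiv.inner_map_map, Submodule.coe_inner, real_inner_smul_left,
      real_inner_smul_right, ← mul_assoc, ← mul_inv, Real.mul_self_sqrt hR.le, hdR,
      inv_mul_le_iff₀ hR, mul_sub, mul_one, mul_div_cancel₀ _ hR.ne']
    exact hxx

theorem exists_regularSimplex {k : ℕ} (hk : 0 < k) :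
    ∃ f : Fin (k + 1) → EuclideanSpace ℝ (Fin k), (∀ a, ‖f a‖ = 1) ∧
      Pairwise fun a b => ⟪f a, f b⟫ ≤ -1 / k := by
  have hdist : Pairwise fun a b : Fin (k + 1) => 2 * 1 ≤
      hammingDist (fun p : Fin 1 × Fin (k + 1) => decide (p.2 = a)) fun p => decide (p.2 = b) := by
    intro a b hab
    refine one_lt_card.2 ⟨(0, a), ?_, (0, b), ?_, by simpa using hab⟩ <;> simp [hab, hab.symm]
  have := exists_sphericalCode_of_blockWeight one_pos one_pos (by omega) _
    (by simp [filter_eq']) hdist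
  rw [one_mul, Nat.add_sub_cancel] at this
  obtain ⟨f, hf₁, hf⟩ := this
  refine ⟨f, hf₁, fun a b hab => (hf hab).trans_eq ?_⟩
  have : (k : ℝ) ≠ 0 := by positivity
  simp only [Nat.cast_one, Nat.cast_add_one, add_sub_cancel_right, one_mul]
  field_simp
  ring

theorem Asph_eq_succ {k : ℕ} {s : ℝ} (hk : 0 < k) (hs : s < 0) (hks : -1 / k ≤ s) :
    Asph k s = k + 1 := by
  obtain ⟨f, hf₁, hf⟩ := exists_regularSimplex hk
  refine (Asph_le_succ hs).antisymm ?_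
  simpa using card_le_Asph hs hf₁ fun a b hab => (hf hab).trans hks

theorem Mmcwc_le_Asph {m n d w : ℕ} (hm : 0 < m) (hw : 0 < w) (hwn : w < n)
    (hs : 1 - (d : ℝ) * n / (m * w * (n - w)) < 0) :
    Mmcwc m n (2 * d) w ≤ Asph (m * (n - 1)) (1 - d * n / (m * w * (n - w))) :=
  csSup_le' fun _ ⟨C, hwt, hdist, hN⟩ => by
    obtain ⟨f, hf₁, hf⟩ := exists_sphericalCode_of_blockWeight hm hw hwn
      (Subtype.val : C → _) (fun a => hwt a a.2) fun a b hab => hdist a a.2 b b.2 (Subtype.coe_injective.ne hab)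
    simpa [hN] using card_le_Asph hs hf₁ hf

theorem mcwc_spherical_code_bound_general (m n d w : ℕ)
    (hm : 1 ≤ m) (hw : 0 < w) (hwn : 2 * w ≤ n)
    (s : ℝ) (hs : s = 1 - (d : ℝ) * n / ((m : ℝ) * w * ((n : ℝ) - w)))
    (hs0 : s < 0) (hsk : -1 / ((m : ℝ) * ((n : ℝ) - 1)) ≤ s) :
    Asph (m * (n - 1)) s = m * (n - 1) + 1 ∧
      Mmcwc m n (2 * d) w ≤ m * (n - 1) + 1 := by
  have hk : 0 < m * (n - 1) := Nat.mul_pos hm (by omega)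
  have hAsph : Asph (m * (n - 1)) s = m * (n - 1) + 1 :=
    Asph_eq_succ hk hs0 (by rwa [Nat.cast_mul, Nat.cast_pred (by omega)])
  subst hs
  exact ⟨hAsph, hAsph ▸ Mmcwc_le_Asph hm hw (by omega) hs0⟩

/-- For `m ≥ 1` and `0 < w ≤ n/2`, if `s = 1 - dn/(mw(n-w))` satisfies
`-1/(m(n-1)) ≤ s < 0`, then `M(m,n,2d,w) ≤ m(n-1) + 1`; this uses the fact that
`A_S(k,s) = k + 1` whenever `-1/k ≤ s < 0`, here with `k = m(n-1)`. -/
theorem mcwc_spherical_code_bound (m n d w : ℕ)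
    (hm : 1 ≤ m) (hd : 0 < d) (hw : 0 < w) (hwn : 2 * w ≤ n)
    (s : ℝ) (hs : s = 1 - (d : ℝ) * n / ((m : ℝ) * w * ((n : ℝ) - w)))
    (hs0 : s < 0) (hsk : -1 / ((m : ℝ) * ((n : ℝ) - 1)) ≤ s) :
    Asph (m * (n - 1)) s = m * (n - 1) + 1 ∧
      Mmcwc m n (2 * d) w ≤ m * (n - 1) + 1 :=
  mcwc_spherical_code_bound_general m n d w hm hw hwn s hs hs0 hsk
end

section
/- The number of binary words of length mn, partitioned into m blocks of length n each of weight exactly w, lying at Hamming distance at most 2(D-1) from a fixed such word, is at most Σ_{i₁+⋯+i_m ≤ D-1} ∏_{j=1}^m C(w,i_j)·C(n-w,i_j). Consequently, M(m,n,2D,w) ≥ C(n,w)^m / Σ_{i₁+⋯+i_m ≤ D-1} ∏_{j=1}^m C(w,i_j)·C(n-w,i_j). -/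
open Finset

/-!
Two words of weight `w` in one block at distance `2i` are obtained from each other by moving
`i` ones, which leaves at most `C(w,i)·C(n-w,i)` choices. Hamming distance is additive over
blocks, so the ball of radius `2(D-1)` is the union of the shells with block distances
`2i₁, …, 2iₘ`, `∑ iⱼ ≤ D-1`, and its size is at most the stated sum. A code of minimum distance
`2D` which cannot be enlarged covers every word by a ball of radius `2D-1`; as all distances are
even, these balls have radius `2(D-1)`, and counting gives `C(n,w)^m ≤ M · (ball size)`.
-/

namespace MultiplyConstantWeight

section Covering

variable {κ β : Type*} [Fintype κ] [DecidableEq β]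

theorem card_le_card_mul_of_forall_exists_hammingDist_lt {S C : Finset (κ → β)} {d V : ℕ}
    (hcover : ∀ x ∈ S, ∃ u ∈ C, hammingDist x u < d)
    (hV : ∀ u ∈ C, #{x ∈ S | hammingDist x u < d} ≤ V) :
    #S ≤ #C * V := by
  have hsub : S ⊆ C.biUnion fun u => {x ∈ S | hammingDist x u < d} := by
    intro x hx
    obtain ⟨u, hu, hxu⟩ := hcover x hx
    exact mem_biUnion.2 ⟨u, hu, mem_filter.2 ⟨hx, hxu⟩⟩
  calc #S ≤ #(C.biUnion fun u => {x ∈ S | hammingDist x u < d}) := card_le_card hsub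
    _ ≤ ∑ u ∈ C, #{x ∈ S | hammingDist x u < d} := card_biUnion_le
    _ ≤ ∑ _u ∈ C, V := sum_le_sum hV
    _ = #C * V := by rw [sum_const, smul_eq_mul]

/-- Gilbert–Varshamov: a code in `S` of maximum size covers `S` by balls of radius `d - 1`. -/
theorem exists_code_card_le_card_mul (S : Finset (κ → β)) {d V : ℕ} (hd : 0 < d)
    (hV : ∀ u ∈ S, #{x ∈ S | hammingDist x u < d} ≤ V) :
    ∃ C ⊆ S, (∀ u ∈ C, ∀ v ∈ C, u ≠ v → d ≤ hammingDist u v) ∧ #S ≤ #C * V := by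
  classical
  set codes := {C ∈ S.powerset | ∀ u ∈ C, ∀ v ∈ C, u ≠ v → d ≤ hammingDist u v}
  obtain ⟨C, hC, hmax⟩ := exists_max_image codes card ⟨∅, by simp [codes]⟩
  obtain ⟨hCS, hCd⟩ := mem_filter.1 hC
  rw [mem_powerset] at hCS
  refine ⟨C, hCS, hCd, card_le_card_mul_of_forall_exists_hammingDist_lt ?_
    fun u hu => hV u (hCS hu)⟩
  intro x hx
  by_contra! hfar
  have hxC : x ∉ C := fun hxC => absurd (hfar x hxC) (by simpa using hd.ne')
  have hins : insert x C ∈ codes := by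
    refine mem_filter.2 ⟨mem_powerset.2 (insert_subset hx hCS), ?_⟩
    simp only [mem_insert]
    rintro u (rfl | hu) v (rfl | hv) huv
    · exact absurd rfl huv
    · exact hfar v hv
    · exact hammingDist_comm u v ▸ hfar u hu
    · exact hCd u hu v hv huv
  have := hmax _ hins
  rw [card_insert_of_notMem hxC] at this
  omega

end Covering

section Block

variable {α : Type*} [Fintype α]

def ones (f : α → Bool) : Finset α := {i | f i = true}

@[simp]
theorem mem_ones {f : α → Bool} {i : α} : i ∈ ones f ↔ f i = true := by
  simp [ones]

theorem ones_injective : Function.Injective (ones : (α → Bool) → Finset α) := by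
  intro f g h
  funext i
  exact Bool.eq_iff_iff.2 (by simpa using Finset.ext_iff.1 h i)

variable [DecidableEq α]

theorem hammingDist_eq_card_sdiff_add_card_sdiff (f g : α → Bool) :
    hammingDist f g = #(ones f \ ones g) + #(ones g \ ones f) := by
  rw [← card_union_of_disjoint disjoint_sdiff_sdiff, hammingDist]
  congr 1
  ext i
  simp only [mem_filter, mem_univ, true_and, mem_union, mem_sdiff, mem_ones]
  cases f i <;> cases g i <;> decide

theorem hammingDist_eq_two_mul_card_sdiff {f g : α → Bool} (h : #(ones f) = #(ones g)) :
    hammingDist f g = 2 * #(ones g \ ones f) := by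
  rw [hammingDist_eq_card_sdiff_add_card_sdiff, card_sdiff_comm h, two_mul]

/-- A word is determined by the ones it gains and loses against `g`, which are `i`-subsets of
the complement of `ones g` and of `ones g`. -/
theorem card_sphere_le {w : ℕ} (g : α → Bool) (hg : #(ones g) = w) (i : ℕ) :
    #{f | #(ones f) = w ∧ hammingDist f g = 2 * i} ≤
      w.choose i * (Fintype.card α - w).choose i := by
  calc _ ≤ #(powersetCard i (ones g) ×ˢ powersetCard i (ones g)ᶜ) :=
        card_le_card_of_injOn (fun f => (ones g \ ones f, ones f \ ones g)) ?_ ?_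
    _ = _ := by rw [card_product, card_powersetCard, card_powersetCard, card_compl, hg]
  · intro f hf
    obtain ⟨hfw, hfd⟩ : #(ones f) = w ∧ hammingDist f g = 2 * i := by simpa using hf
    have hgain : #(ones g \ ones f) = i := by
      rw [hammingDist_eq_two_mul_card_sdiff (hfw.trans hg.symm)] at hfd
      omega
    have hlose : #(ones f \ ones g) = i := card_sdiff_comm (hg.trans hfw.symm) ▸ hgain
    simp only [coe_product, Set.mem_prod, mem_coe, mem_powersetCard]
    exact ⟨⟨sdiff_subset, hgain⟩, fun x hx => mem_compl.2 (mem_sdiff.1 hx).2, hlose⟩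
  · intro f₁ _ f₂ _ h
    obtain ⟨hgain, hlose⟩ := Prod.mk.inj h
    apply ones_injective
    rw [← sdiff_union_inter (ones f₁) (ones g), ← sdiff_union_inter (ones f₂) (ones g),
      inter_comm, inter_comm (ones f₂), ← sdiff_sdiff_self_left, ← sdiff_sdiff_self_left,
      hgain, hlose]

theorem card_filter_card_ones_eq (w : ℕ) :
    #{f : α → Bool | #(ones f) = w} = (Fintype.card α).choose w := by
  rw [← card_univ, ← card_powersetCard]
  refine card_nbij ones (fun f hf => ?_) ones_injective.injOn fun s hs => ?_
  · simpa using hf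
  · have hones : ones (fun i => decide (i ∈ s)) = s := by ext; simp
    exact ⟨_, by simpa [hones] using (mem_powersetCard.1 (mem_coe.1 hs)).2, hones⟩

end Block

section Blocks

variable {ι α : Type*} [Fintype ι] [Fintype α]

theorem hammingDist_eq_sum_hammingDist_blocks {β : Type*} [DecidableEq β] (c c' : ι × α → β) :
    hammingDist c c' = ∑ j, hammingDist (fun i => c (j, i)) (fun i => c' (j, i)) := by
  simp only [hammingDist, card_filter]
  exact Fintype.sum_prod_type _

variable [DecidableEq ι] [DecidableEq α]

variable (ι α) in
def blockWeightWords (w : ℕ) : Finset (ι × α → Bool) :=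
  {c | ∀ j, #(ones (fun i => c (j, i))) = w}

variable {w : ℕ}

@[simp]
theorem mem_blockWeightWords {c : ι × α → Bool} :
    c ∈ blockWeightWords ι α w ↔ ∀ j, #(ones (fun i => c (j, i))) = w := by
  simp [blockWeightWords]

theorem card_blockWeightWords :
    #(blockWeightWords ι α w) = (Fintype.card α).choose w ^ Fintype.card ι := by
  rw [← card_filter_card_ones_eq, ← card_univ, ← prod_const, ← Fintype.card_piFinset]
  refine card_nbij' (fun c j i => c (j, i)) (fun F p => F p.1 p.2) (fun c hc => ?_)
    (fun F hF => ?_) (fun _ _ => rfl) (fun _ _ => rfl)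
  · simpa using hc
  · simpa using hF

theorem even_hammingDist {c c' : ι × α → Bool} (hc : c ∈ blockWeightWords ι α w)
    (hc' : c' ∈ blockWeightWords ι α w) : Even (hammingDist c c') := by
  rw [hammingDist_eq_sum_hammingDist_blocks]
  refine even_sum _ fun j _ => ?_
  rw [hammingDist_eq_two_mul_card_sdiff ((mem_blockWeightWords.1 hc j).trans
    (mem_blockWeightWords.1 hc' j).symm)]
  exact even_two_mul _

theorem card_shell_le (c₀ : ι × α → Bool) (hc₀ : ∀ j, #(ones (fun i => c₀ (j, i))) = w)
    (t : ι → ℕ) :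
    #{c : ι × α → Bool | ∀ j, #(ones (fun i => c (j, i))) = w ∧
        hammingDist (fun i => c (j, i)) (fun i => c₀ (j, i)) = 2 * t j} ≤
      ∏ j, w.choose (t j) * (Fintype.card α - w).choose (t j) := by
  calc _ ≤ #(Fintype.piFinset fun j =>
          {f | #(ones f) = w ∧ hammingDist f (fun i => c₀ (j, i)) = 2 * t j}) :=
        card_le_card_of_injOn (fun c j i => c (j, i)) (fun c hc => by simpa using hc)
          Function.curry_injective.injOn
    _ = ∏ j, #{f | #(ones f) = w ∧ hammingDist f (fun i => c₀ (j, i)) = 2 * t j} :=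
        Fintype.card_piFinset _
    _ ≤ _ := prod_le_prod' fun j _ => card_sphere_le _ (hc₀ j) (t j)

theorem card_ball_le {D : ℕ} (hD : 0 < D) (c₀ : ι × α → Bool)
    (hc₀ : ∀ j, #(ones (fun i => c₀ (j, i))) = w) :
    #{c : ι × α → Bool |
        (∀ j, #(ones (fun i => c (j, i))) = w) ∧ hammingDist c c₀ ≤ 2 * (D - 1)} ≤
      ∑ t ∈ {t : ι → Fin D | ∑ j, (t j : ℕ) ≤ D - 1},
        ∏ j, w.choose (t j) * (Fintype.card α - w).choose (t j) := by
  set T : Finset (ι → Fin D) := {t | ∑ j, (t j : ℕ) ≤ D - 1}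
  set shell : (ι → Fin D) → Finset (ι × α → Bool) := fun t =>
    {c | ∀ j, #(ones (fun i => c (j, i))) = w ∧
      hammingDist (fun i => c (j, i)) (fun i => c₀ (j, i)) = 2 * t j}
  have hcover : ({c | (∀ j, #(ones (fun i => c (j, i))) = w) ∧
      hammingDist c c₀ ≤ 2 * (D - 1)} : Finset (ι × α → Bool)) ⊆ T.biUnion shell := by
    intro c hc
    obtain ⟨hcw, hcd⟩ :
        (∀ j, #(ones (fun i => c (j, i))) = w) ∧ hammingDist c c₀ ≤ 2 * (D - 1) := by
      simpa using hc
    set k : ι → ℕ := fun j => #(ones (fun i => c₀ (j, i)) \ ones (fun i => c (j, i)))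
    have hblock : ∀ j, hammingDist (fun i => c (j, i)) (fun i => c₀ (j, i)) = 2 * k j := fun j =>
      hammingDist_eq_two_mul_card_sdiff ((hcw j).trans (hc₀ j).symm)
    have hk : ∑ j, k j ≤ D - 1 := by
      rw [hammingDist_eq_sum_hammingDist_blocks] at hcd
      simp only [hblock, ← mul_sum] at hcd
      omega
    have hkD : ∀ j, k j < D := fun j => by
      have := single_le_sum (fun j _ => Nat.zero_le (k j)) (mem_univ j)
      omega
    exact mem_biUnion.2 ⟨fun j => ⟨k j, hkD j⟩, by simpa [T] using hk,
      by simpa [shell] using fun j => ⟨hcw j, hblock j⟩⟩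
  calc _ ≤ #(T.biUnion shell) := card_le_card hcover
    _ ≤ ∑ t ∈ T, #(shell t) := card_biUnion_le
    _ ≤ _ := sum_le_sum fun t _ => card_shell_le c₀ hc₀ (fun j => t j)

theorem filter_hammingDist_lt_two_mul_subset {D : ℕ} {u : ι × α → Bool}
    (hu : u ∈ blockWeightWords ι α w) :
    {c ∈ blockWeightWords ι α w | hammingDist c u < 2 * D} ⊆
      ({c | (∀ j, #(ones (fun i => c (j, i))) = w) ∧ hammingDist c u ≤ 2 * (D - 1)} :
        Finset (ι × α → Bool)) := by
  intro c hc
  obtain ⟨hcS, hcu⟩ := mem_filter.1 hc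
  obtain ⟨k, hk⟩ := even_hammingDist hcS hu
  exact mem_filter.2 ⟨mem_univ _, mem_blockWeightWords.1 hcS, by omega⟩

end Blocks

theorem card_le_Mmcwc {m n d w : ℕ} {C : Finset (Fin m × Fin n → Bool)}
    (hCw : C ⊆ blockWeightWords (Fin m) (Fin n) w)
    (hCd : ∀ u ∈ C, ∀ v ∈ C, u ≠ v → d ≤ hammingDist u v) : #C ≤ Mmcwc m n d w :=
  le_csSup ⟨Fintype.card (Fin m × Fin n → Bool), by rintro k ⟨C, -, -, rfl⟩; exact card_le_univ C⟩
    ⟨C, fun c hc => mem_blockWeightWords.1 (hCw hc), hCd, rfl⟩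

end MultiplyConstantWeight

open MultiplyConstantWeight

theorem mcwc_gilbert_varshamov_general (m n w D : ℕ)
    (hD : 0 < D)
    (c₀ : Fin m × Fin n → Bool)
    (hc₀ : ∀ j : Fin m, (univ.filter (fun i : Fin n => c₀ (j, i) = true)).card = w) :
    ((univ.filter (fun c : Fin m × Fin n → Bool =>
        (∀ j : Fin m, (univ.filter (fun i : Fin n => c (j, i) = true)).card = w) ∧
        hammingDist c c₀ ≤ 2 * (D - 1))).card
      ≤ ∑ t ∈ univ.filter (fun t : Fin m → Fin D => (∑ j, (t j : ℕ)) ≤ D - 1),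
          ∏ j, Nat.choose w (t j) * Nat.choose (n - w) (t j)) ∧
    Nat.choose n w ^ m ≤ Mmcwc m n (2 * D) w *
      ∑ t ∈ univ.filter (fun t : Fin m → Fin D => (∑ j, (t j : ℕ)) ≤ D - 1),
          ∏ j, Nat.choose w (t j) * Nat.choose (n - w) (t j) := by
  obtain ⟨C, hCS, hCd, hcard⟩ :=
    exists_code_card_le_card_mul (blockWeightWords (Fin m) (Fin n) w) (d := 2 * D) (by omega)
      fun u hu =>
        (card_le_card (filter_hammingDist_lt_two_mul_subset hu)).trans
          (card_ball_le hD u (mem_blockWeightWords.1 hu))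
  rw [card_blockWeightWords, Fintype.card_fin, Fintype.card_fin] at hcard
  refine ⟨?_, hcard.trans ?_⟩
  · convert card_ball_le hD c₀ hc₀ using 2
    -- here `∀ j : Fin m` is decided by `Nat.decidableForallFin`, in the lemma via `Fintype`
    · ext
      simp [ones]
    · rw [Fintype.card_fin]
  exact Nat.mul_le_mul_right _ (card_le_Mmcwc hCS hCd)

/-- Gilbert–Varshamov bound for multiply constant-weight codes: the Hamming
ball of radius `2(D-1)` around a word with all block weights `w` contains at
most `∑_{i₁+⋯+i_m ≤ D-1} ∏_j C(w,i_j)·C(n-w,i_j)` such words, and consequently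
`M(m,n,2D,w) · (that sum) ≥ C(n,w)^m`. -/
theorem mcwc_gilbert_varshamov (m n w D : ℕ)
    (hm : 0 < m) (hw : w ≤ n) (hD : 0 < D)
    (c₀ : Fin m × Fin n → Bool)
    (hc₀ : ∀ j : Fin m, (univ.filter (fun i : Fin n => c₀ (j, i) = true)).card = w) :
    ((univ.filter (fun c : Fin m × Fin n → Bool =>
        (∀ j : Fin m, (univ.filter (fun i : Fin n => c (j, i) = true)).card = w) ∧
        hammingDist c c₀ ≤ 2 * (D - 1))).card
      ≤ ∑ t ∈ univ.filter (fun t : Fin m → Fin D => (∑ j, (t j : ℕ)) ≤ D - 1),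
          ∏ j, Nat.choose w (t j) * Nat.choose (n - w) (t j)) ∧
    Nat.choose n w ^ m ≤ Mmcwc m n (2 * D) w *
      ∑ t ∈ univ.filter (fun t : Fin m → Fin D => (∑ j, (t j : ℕ)) ≤ D - 1),
          ∏ j, Nat.choose w (t j) * Nat.choose (n - w) (t j) :=
  mcwc_gilbert_varshamov_general m n w D hD c₀ hc₀
end

section
/- For all integers m ≥ 1, n ≥ 1, w with 0 ≤ w ≤ n, and D ≥ 1: Σ_{i₁+⋯+i_m ≤ D-1} ∏_{j=1}^m C(w,i_j)·C(n-w,i_j) ≤ Σ_{0 ≤ i ≤ D-1} C(mw,i)·C(m(n-w),i), where the left sum ranges over m-tuples of nonnegative integers and C denotes the binomial coefficient. -/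
/-!
Split the left-hand side according to the total `i = i₁ + ⋯ + i_m < D`. On each such fibre,
`∑ ∏ C(w,i_j) C(n-w,i_j) ≤ (∑ ∏ C(w,i_j)) · (∑ ∏ C(n-w,i_j))` since all terms are nonnegative,
and by the multi-fold Vandermonde identity (coefficient of `X^i` in `((1+X)^w)^m`) the two factors
are `C(mw,i)` and `C(m(n-w),i)`.
-/

open Finset

theorem Finset.sum_mul_le_sum_mul_sum {ι R : Type*} [CommSemiring R] [PartialOrder R]
    [IsOrderedRing R] {s : Finset ι} {f g : ι → R} (hf : ∀ i ∈ s, 0 ≤ f i)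
    (hg : ∀ i ∈ s, 0 ≤ g i) :
    ∑ i ∈ s, f i * g i ≤ (∑ i ∈ s, f i) * ∑ i ∈ s, g i := by
  rw [sum_mul]
  exact sum_le_sum fun i hi => mul_le_mul_of_nonneg_left (single_le_sum hg hi) (hf i hi)

theorem Finset.sum_finsuppAntidiag_prod_choose {ι : Type*} [DecidableEq ι] (s : Finset ι)
    (f : ι → ℕ) (n : ℕ) :
    ∑ l ∈ s.finsuppAntidiag n, ∏ j ∈ s, (f j).choose (l j) = (∑ j ∈ s, f j).choose n := by
  have hcoeff (k i : ℕ) : PowerSeries.coeff i ((1 + PowerSeries.X : PowerSeries ℕ) ^ k)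
      = k.choose i := by
    rw [← Polynomial.coe_X, ← Polynomial.coe_one, ← Polynomial.coe_add, ← Polynomial.coe_pow,
      Polynomial.coeff_coe, Polynomial.coeff_one_add_X_pow, Nat.cast_id]
  have hprod := PowerSeries.coeff_prod (fun j => (1 + PowerSeries.X : PowerSeries ℕ) ^ f j) n s
  simp only [hcoeff, prod_pow_eq_pow_sum] at hprod
  exact hprod.symm

theorem Finset.sum_fin_tuples_prod_eq_sum_finsuppAntidiag {ι M : Type*} [Fintype ι]
    [DecidableEq ι] [CommSemiring M] {D i : ℕ} (hi : i < D) (g : ι → ℕ → M) :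
    ∑ t ∈ univ.filter (fun t : ι → Fin D => ∑ j, (t j : ℕ) = i), ∏ j, g j (t j)
      = ∑ l ∈ univ.finsuppAntidiag i, ∏ j, g j (l j) := by
  have hlt : ∀ l ∈ univ.finsuppAntidiag i, ∀ j : ι, l j < D := fun l hl j =>
    (single_le_sum (fun _ _ => Nat.zero_le _) (mem_univ j)).trans_lt
      ((mem_finsuppAntidiag.1 hl).1 ▸ hi)
  refine sum_nbij' (fun t => Finsupp.equivFunOnFinite.symm fun j => (t j : ℕ))
    (fun l j => ⟨l j % D, Nat.mod_lt _ (by omega)⟩) ?_ ?_ ?_ ?_ ?_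
  · intro t ht
    simpa using ht
  · intro l hl
    simpa [Nat.mod_eq_of_lt (hlt l hl _)] using hl
  · intro t _
    funext j
    exact Fin.ext (Nat.mod_eq_of_lt (t j).isLt)
  · intro l hl
    ext j
    simp [Nat.mod_eq_of_lt (hlt l hl j)]
  · intro t _
    simp

theorem tuple_ball_le_aggregate_ball_general (m n w D : ℕ)
    (hD : 1 ≤ D) :
    (∑ t ∈ univ.filter (fun t : Fin m → Fin D => (∑ j, (t j : ℕ)) ≤ D - 1),
        ∏ j, Nat.choose w (t j) * Nat.choose (n - w) (t j))
      ≤ ∑ i ∈ Finset.range D, Nat.choose (m * w) i * Nat.choose (m * (n - w)) i := by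
  have hfibre (i : ℕ) (hi : i < D) :
      (univ.filter fun t : Fin m → Fin D => ∑ j, (t j : ℕ) ≤ D - 1).filter
        (fun t => ∑ j, (t j : ℕ) = i) = univ.filter fun t => ∑ j, (t j : ℕ) = i := by
    rw [filter_filter]
    exact filter_congr fun t _ => by constructor <;> intro h <;> omega
  have hvandermonde (k i : ℕ) (hi : i < D) :
      ∑ t ∈ univ.filter (fun t : Fin m → Fin D => ∑ j, (t j : ℕ) = i), ∏ j, k.choose (t j)
        = (m * k).choose i := by
    rw [sum_fin_tuples_prod_eq_sum_finsuppAntidiag hi fun _ => k.choose,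
      sum_finsuppAntidiag_prod_choose, sum_const, card_univ, Fintype.card_fin, smul_eq_mul]
  rw [← sum_fiberwise_of_maps_to (t := range D) (g := fun t => ∑ j, (t j : ℕ)) fun t ht => by
    rw [mem_filter] at ht; rw [mem_range]; omega]
  refine sum_le_sum fun i hi => ?_
  rw [mem_range] at hi
  rw [hfibre i hi, ← hvandermonde w i hi, ← hvandermonde (n - w) i hi]
  simp only [prod_mul_distrib]
  exact sum_mul_le_sum_mul_sum (fun _ _ => Nat.zero_le _) fun _ _ => Nat.zero_le _

/-- The product-form ball volume of the multiply constant-weight metric is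
dominated by a single Johnson-scheme ball of the aggregated parameters:
`∑_{i₁+⋯+i_m ≤ D-1} ∏_j C(w,i_j)·C(n-w,i_j) ≤ ∑_{i ≤ D-1} C(mw,i)·C(m(n-w),i)`. -/
theorem tuple_ball_le_aggregate_ball (m n w D : ℕ)
    (hm : 1 ≤ m) (hn : 1 ≤ n) (hw : w ≤ n) (hD : 1 ≤ D) :
    (∑ t ∈ univ.filter (fun t : Fin m → Fin D => (∑ j, (t j : ℕ)) ≤ D - 1),
        ∏ j, Nat.choose w (t j) * Nat.choose (n - w) (t j))
      ≤ ∑ i ∈ Finset.range D, Nat.choose (m * w) i * Nat.choose (m * (n - w)) i :=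
  tuple_ball_le_aggregate_ball_general m n w D hD
end
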